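/- arXiv:2404.17214 — 8 statements merged into one kernel-verified Lean document; each statement's English description precedes it below -/
import Mathlib

section
/- Let x', y' be two distinct vertices of a 0/1-polytope P ⊆ {0,1}^E each minimizing w·x over their respective faces {x ∈ P : x_e = 0} and {x ∈ P : x_e = 1}, chosen to minimize their Hamming distance among all such pairs. If z = μx' + (1-μ)y' for some μ ∈ (0,1) can be written as a convex combination of vertices of P all distinct from x' and y', then each such vertex z^i with z^i_e = 0 satisfies w·z^i = w·x' and each with z^i_e = 1 satisfies w·z^i = w·y'. -/
open scoped Classical

/-- Hamming distance between two vectors indexed by a finite type. -/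
noncomputable def hammingDist' {ι : Type*} [Fintype ι] (x y : ι → ℝ) : ℕ :=
  (Finset.univ.filter fun i => x i ≠ y i).card

/-- Let `P` be the convex hull of a finite set `V` of 0/1 vectors, and let
`x', y'` be vertices minimizing `w · x` among vertices with `x e = 0` (resp. `x e = 1`),
chosen at minimum Hamming distance among all such minimizing pairs.  If a strict convex
combination `μ x' + (1-μ) y'` is written as a convex combination of vertices all different
from `x'` and `y'`, then every such vertex `z i` with `z i e = 0` satisfies
`w · z i = w · x'`, and every one with `z i e = 1` satisfies `w · z i = w · y'`. -/
theorem stmt1 {ι : Type*} [Fintype ι]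
    (V : Finset (ι → ℝ)) (hV01 : ∀ v ∈ V, ∀ i, v i = 0 ∨ v i = 1)
    (w : ι → ℝ) (e : ι) (x' y' : ι → ℝ)
    (hx'V : x' ∈ V) (hy'V : y' ∈ V) (hx'e : x' e = 0) (hy'e : y' e = 1)
    (hx'min : ∀ v ∈ V, v e = 0 → ∑ i, w i * x' i ≤ ∑ i, w i * v i)
    (hy'min : ∀ v ∈ V, v e = 1 → ∑ i, w i * y' i ≤ ∑ i, w i * v i)
    (hham : ∀ a ∈ V, ∀ b ∈ V, a e = 0 → b e = 1 →
      (∀ v ∈ V, v e = 0 → ∑ i, w i * a i ≤ ∑ i, w i * v i) →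
      (∀ v ∈ V, v e = 1 → ∑ i, w i * b i ≤ ∑ i, w i * v i) →
      hammingDist' x' y' ≤ hammingDist' a b)
    (μ : ℝ) (hμ : μ ∈ Set.Ioo (0 : ℝ) 1)
    (k : ℕ) (z : Fin k → (ι → ℝ)) (lam : Fin k → ℝ)
    (hzV : ∀ i, z i ∈ V) (hzx : ∀ i, z i ≠ x') (hzy : ∀ i, z i ≠ y')
    (hlam : ∀ i, 0 < lam i) (hlam1 : ∑ i, lam i = 1)
    (hcomb : (μ • x' + (1 - μ) • y') = ∑ i, lam i • z i) :
    ∀ i, (z i e = 0 → ∑ j, w j * z i j = ∑ j, w j * x' j) ∧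
         (z i e = 1 → ∑ j, w j * z i j = ∑ j, w j * y' j) := by
  classical
  have hcoord : ∀ j, μ * x' j + (1 - μ) * y' j = ∑ i, lam i * z i j := by
    intro j
    have h := congrFun hcomb j
    simpa [Finset.sum_apply] using h
  set f : (ι → ℝ) → ℝ := fun v => ∑ j, w j * v j with hf
  have hsumf : ∑ i, lam i * f (z i) = μ * f x' + (1 - μ) * f y' := by
    calc ∑ i, lam i * f (z i)
        = ∑ i, ∑ j, lam i * (w j * z i j) := by
          simp [hf, Finset.mul_sum]
      _ = ∑ j, ∑ i, lam i * (w j * z i j) := Finset.sum_comm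
      _ = ∑ j, w j * (∑ i, lam i * z i j) := by
          refine Finset.sum_congr rfl fun j _ => ?_
          rw [Finset.mul_sum]
          exact Finset.sum_congr rfl fun i _ => by ring
      _ = ∑ j, w j * (μ * x' j + (1 - μ) * y' j) := by
          refine Finset.sum_congr rfl fun j _ => ?_
          rw [hcoord j]
      _ = ∑ j, (μ * (w j * x' j) + (1 - μ) * (w j * y' j)) := by
          refine Finset.sum_congr rfl fun j _ => ?_
          ring
      _ = μ * f x' + (1 - μ) * f y' := by
          rw [Finset.sum_add_distrib, ← Finset.mul_sum, ← Finset.mul_sum]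
  have he : ∑ i, lam i * z i e = 1 - μ := by
    have h := hcoord e
    rw [hx'e, hy'e] at h
    linarith [h]
  have hsumg : ∑ i, lam i * ((1 - z i e) * f x' + z i e * f y')
      = μ * f x' + (1 - μ) * f y' := by
    have h : ∑ i, lam i * ((1 - z i e) * f x' + z i e * f y')
        = (∑ i, lam i) * f x' + (∑ i, lam i * z i e) * (f y' - f x') := by
      rw [Finset.sum_mul, Finset.sum_mul, ← Finset.sum_add_distrib]
      refine Finset.sum_congr rfl fun i _ => ?_
      ring
    rw [h, hlam1, he]
    ring
  have hle : ∀ i ∈ Finset.univ (α := Fin k),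
      lam i * ((1 - z i e) * f x' + z i e * f y') ≤ lam i * f (z i) := by
    intro i _
    rcases hV01 (z i) (hzV i) e with h0 | h1
    · rw [h0]
      simp only [sub_zero, one_mul, zero_mul, add_zero]
      exact mul_le_mul_of_nonneg_left (hx'min (z i) (hzV i) h0) (hlam i).le
    · rw [h1]
      simp only [sub_self, zero_mul, one_mul, zero_add]
      exact mul_le_mul_of_nonneg_left (hy'min (z i) (hzV i) h1) (hlam i).le
  have heqsum : ∑ i, lam i * ((1 - z i e) * f x' + z i e * f y')
      = ∑ i, lam i * f (z i) := by rw [hsumf, hsumg]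
  have heq : ∀ i ∈ Finset.univ (α := Fin k),
      lam i * ((1 - z i e) * f x' + z i e * f y') = lam i * f (z i) :=
    (Finset.sum_eq_sum_iff_of_le hle).mp heqsum
  intro i
  constructor
  · intro h0
    have h := heq i (Finset.mem_univ i)
    rw [h0] at h
    simp only [sub_zero, one_mul, zero_mul, add_zero] at h
    have := mul_left_cancel₀ (ne_of_gt (hlam i)) h
    exact this.symm
  · intro h1
    have h := heq i (Finset.mem_univ i)
    rw [h1] at h
    simp only [sub_self, zero_mul, one_mul, zero_add] at h
    have := mul_left_cancel₀ (ne_of_gt (hlam i)) h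
    exact this.symm
end

section
/- Every admissible query F ⊆ E must contain all uncolored non-trivial elements, i.e., all elements e with ℓ_e < h_e that are neither blue (h_e ≤ T⁺_e) nor red (ℓ_e ≥ T⁻_e). -/
/-- Total weight of a feasible set. -/
noncomputable def cst {ι : Type*} (w : ι → ℝ) (S : Finset ι) : ℝ := ∑ f ∈ S, w f

/-- `S` is an optimal feasible set for weights `w`. -/
def IsOpt {ι : Type*} (F : Set (Finset ι)) (w : ι → ℝ) (S : Finset ι) : Prop :=
  S ∈ F ∧ ∀ S' ∈ F, cst w S ≤ cst w S'

/-- `OPT^{-e}`: minimum weight of a feasible set avoiding `e`. -/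
noncomputable def OPTm {ι : Type*} (F : Set (Finset ι)) (w : ι → ℝ) (e : ι) : ℝ :=
  sInf (cst w '' {S | S ∈ F ∧ e ∉ S})

/-- `OPT^{+e}`: minimum weight (not counting `e`) of a feasible set containing `e`. -/
noncomputable def OPTp {ι : Type*} [DecidableEq ι] (F : Set (Finset ι)) (w : ι → ℝ) (e : ι) : ℝ :=
  sInf ((fun S => cst w (S.erase e)) '' {S | S ∈ F ∧ e ∈ S})

/-- The threshold `T_e(w_{-e}) = OPT^{-e} - OPT^{+e}` (independent of `w e`). -/
noncomputable def Thr {ι : Type*} [DecidableEq ι] (F : Set (Finset ι)) (w : ι → ℝ) (e : ι) : ℝ :=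
  OPTm F w e - OPTp F w e

/-- A realization of the uncertainty intervals (one weight in each interval). -/
def Realiz {ι : Type*} (lo hi : ι → ℝ) (w : ι → ℝ) : Prop :=
  ∀ f, w f ∈ Set.Icc (lo f) (hi f)

/-- `S` is a universally optimal solution for intervals `[lo, hi]`: it is feasible and
optimal for every realization of the intervals. -/
def UnivOptSol {ι : Type*} (F : Set (Finset ι)) (lo hi : ι → ℝ) (S : Finset ι) : Prop :=
  S ∈ F ∧ ∀ w : ι → ℝ, Realiz lo hi w → ∀ S' ∈ F, cst w S ≤ cst w S'

/-- `Q` is an admissible query: whatever true weights are revealed for the elements of `Q`,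
the resulting instance (with singleton intervals on `Q`) has a universally optimal
solution. -/
def Admissible {ι : Type*} [DecidableEq ι] (F : Set (Finset ι)) (lo hi : ι → ℝ) (Q : Finset ι) : Prop :=
  ∀ q : ι → ℝ, (∀ f ∈ Q, q f ∈ Set.Icc (lo f) (hi f)) →
    ∃ S : Finset ι, UnivOptSol F (fun f => if f ∈ Q then q f else lo f)
      (fun f => if f ∈ Q then q f else hi f) S

/-- `OPT^{-e}` as an extended real (`⊤` when no feasible set avoids `e`). -/
noncomputable def eOPTm {ι : Type*} (F : Set (Finset ι)) (w : ι → ℝ) (e : ι) : EReal :=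
  sInf ((fun S => ((cst w S : ℝ) : EReal)) '' {S | S ∈ F ∧ e ∉ S})

/-- `OPT^{+e}` as an extended real (`⊤` when no feasible set contains `e`). -/
noncomputable def eOPTp {ι : Type*} [DecidableEq ι] (F : Set (Finset ι)) (w : ι → ℝ) (e : ι) : EReal :=
  sInf ((fun S => ((cst w (S.erase e) : ℝ) : EReal)) '' {S | S ∈ F ∧ e ∈ S})

/-- The threshold `T_e(w_{-e}) = OPT^{-e} - OPT^{+e}`; it is `+∞` when `e` lies in every
feasible set and `-∞` when `e` lies in no feasible set. -/
noncomputable def eThr {ι : Type*} [DecidableEq ι] (F : Set (Finset ι)) (w : ι → ℝ) (e : ι) : EReal :=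
  eOPTm F w e - eOPTp F w e

/-- The threshold of inclusion `T⁺_e`: infimum of `T_e` over realizations of the
uncertainty intervals of `E \ {e}`. -/
noncomputable def eTplus {ι : Type*} [DecidableEq ι] (F : Set (Finset ι)) (lo hi : ι → ℝ) (e : ι) : EReal :=
  sInf {t | ∃ w : ι → ℝ, (∀ f, f ≠ e → w f ∈ Set.Icc (lo f) (hi f)) ∧ t = eThr F w e}

/-- The threshold of exclusion `T⁻_e`: supremum of `T_e` over realizations. -/
noncomputable def eTminus {ι : Type*} [DecidableEq ι] (F : Set (Finset ι)) (lo hi : ι → ℝ) (e : ι) : EReal :=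
  sSup {t | ∃ w : ι → ℝ, (∀ f, f ≠ e → w f ∈ Set.Icc (lo f) (hi f)) ∧ t = eThr F w e}

/-- `e` is blue: non-trivial interval with `h e ≤ T⁺_e`. -/
def Blue {ι : Type*} [DecidableEq ι] (F : Set (Finset ι)) (lo hi : ι → ℝ) (e : ι) : Prop :=
  lo e < hi e ∧ (hi e : EReal) ≤ eTplus F lo hi e

/-- `e` is red: non-trivial interval with `T⁻_e ≤ ℓ e`. -/
def Red {ι : Type*} [DecidableEq ι] (F : Set (Finset ι)) (lo hi : ι → ℝ) (e : ι) : Prop :=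
  lo e < hi e ∧ eTminus F lo hi e ≤ (lo e : EReal)


private lemma coe_sInf_image' (s : Set ℝ) (hfin : s.Finite) (hne : s.Nonempty) :
    sInf (((↑) : ℝ → EReal) '' s) = ((sInf s : ℝ) : EReal) := by
  refine le_antisymm (sInf_le ⟨_, hne.csInf_mem hfin, rfl⟩) (le_sInf ?_)
  rintro x ⟨y, hy, rfl⟩
  exact_mod_cast csInf_le hfin.bddBelow hy

private lemma Thr_congr {ι : Type*} [DecidableEq ι] (F : Set (Finset ι)) (w w' : ι → ℝ)
    (e : ι) (h : ∀ f, f ≠ e → w f = w' f) : Thr F w e = Thr F w' e := by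
  have hm : OPTm F w e = OPTm F w' e := by
    unfold OPTm
    congr 1
    refine Set.image_congr ?_
    rintro S ⟨hS1, hS2⟩
    exact Finset.sum_congr rfl fun f hf => h f (fun hfe => hS2 (hfe ▸ hf))
  have hp : OPTp F w e = OPTp F w' e := by
    unfold OPTp
    congr 1
    refine Set.image_congr ?_
    rintro S ⟨hS1, hS2⟩
    exact Finset.sum_congr rfl fun f hf => h f (Finset.ne_of_mem_erase hf)
  unfold Thr
  rw [hm, hp]

/-- Every admissible query must contain all uncolored non-trivial
elements, i.e. all `e` with `ℓ e < h e` that are neither blue nor red. -/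
theorem stmt8 {ι : Type*} [Fintype ι] [DecidableEq ι]
    (F : Set (Finset ι)) (lo hi : ι → ℝ) (hlh : ∀ f, lo f ≤ hi f)
    (A : Finset ι) (hA : Admissible F lo hi A) :
    ∀ e : ι, lo e < hi e → ¬ Blue F lo hi e → ¬ Red F lo hi e → e ∈ A := by
  intro e he hB hR
  by_contra heA
  set Fm : Set (Finset ι) := {S | S ∈ F ∧ e ∉ S} with hFmdef
  set Fp : Set (Finset ι) := {S | S ∈ F ∧ e ∈ S} with hFpdef
  -- Case: no feasible set contains e
  by_cases hFpne : Fp.Nonempty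
  swap
  · have hPempty : Fp = ∅ := Set.not_nonempty_iff_eq_empty.mp hFpne
    have hbot : ∀ w : ι → ℝ, eThr F w e = ⊥ := by
      intro w
      have : eOPTp F w e = ⊤ := by
        unfold eOPTp
        rw [show {S | S ∈ F ∧ e ∈ S} = (∅ : Set (Finset ι)) from hPempty,
          Set.image_empty, sInf_empty]
      rw [eThr, this, EReal.sub_top]
    refine hR ⟨he, ?_⟩
    refine sSup_le ?_
    rintro t ⟨w, -, rfl⟩
    rw [hbot w]
    exact bot_le
  -- Case: every feasible set contains e
  by_cases hFmne : Fm.Nonempty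
  swap
  · have hMempty : Fm = ∅ := Set.not_nonempty_iff_eq_empty.mp hFmne
    have htop : ∀ w : ι → ℝ, eThr F w e = ⊤ := by
      intro w
      have h1 : eOPTm F w e = ⊤ := by
        unfold eOPTm
        rw [show {S | S ∈ F ∧ e ∉ S} = (∅ : Set (Finset ι)) from hMempty,
          Set.image_empty, sInf_empty]
      obtain ⟨S0, hS0⟩ := hFpne
      have h2 : eOPTp F w e ≠ ⊤ := by
        refine ne_top_of_le_ne_top (EReal.coe_ne_top (cst w (S0.erase e))) ?_
        exact sInf_le ⟨S0, hS0, rfl⟩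
      rw [eThr, h1, sub_eq_add_neg]
      exact EReal.top_add_of_ne_bot (fun hb => h2 (EReal.neg_eq_bot_iff.mp hb))
    refine hB ⟨he, ?_⟩
    refine le_sInf ?_
    rintro t ⟨w, -, rfl⟩
    rw [htop w]
    exact le_top
  -- Main case: both Fm and Fp nonempty
  have hFmfin : Fm.Finite := Set.toFinite Fm
  have hFpfin : Fp.Finite := Set.toFinite Fp
  -- eThr is the coercion of Thr
  have ethr_eq : ∀ w : ι → ℝ, eThr F w e = ((Thr F w e : ℝ) : EReal) := by
    intro w
    have hm : eOPTm F w e = ((OPTm F w e : ℝ) : EReal) := by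
      unfold eOPTm OPTm
      rw [show (fun S => ((cst w S : ℝ) : EReal)) '' {S | S ∈ F ∧ e ∉ S}
          = (((↑) : ℝ → EReal)) '' (cst w '' Fm) by rw [Set.image_image]]
      exact coe_sInf_image' _ (hFmfin.image _) (hFmne.image _)
    have hp : eOPTp F w e = ((OPTp F w e : ℝ) : EReal) := by
      unfold eOPTp OPTp
      rw [show (fun S => ((cst w (S.erase e) : ℝ) : EReal)) '' {S | S ∈ F ∧ e ∈ S}
          = (((↑) : ℝ → EReal)) '' ((fun S => cst w (S.erase e)) '' Fp) by
        rw [Set.image_image]]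
      exact coe_sInf_image' _ (hFpfin.image _) (hFpne.image _)
    rw [eThr, Thr, hm, hp, ← EReal.coe_sub]
  -- Extract witnesses from non-blueness and non-redness
  have hB' : ¬ ((hi e : EReal) ≤ eTplus F lo hi e) := fun h => hB ⟨he, h⟩
  have hR' : ¬ (eTminus F lo hi e ≤ (lo e : EReal)) := fun h => hR ⟨he, h⟩
  rw [eTplus, le_sInf_iff] at hB'
  push_neg at hB'
  obtain ⟨t1, ⟨w₁, hw₁, rfl⟩, ht1⟩ := hB'
  rw [eTminus, sSup_le_iff] at hR'
  push_neg at hR'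
  obtain ⟨t2, ⟨w₂, hw₂, rfl⟩, ht2⟩ := hR'
  rw [ethr_eq w₁, EReal.coe_lt_coe_iff] at ht1
  rw [ethr_eq w₂, EReal.coe_lt_coe_iff] at ht2
  -- Find a realization whose threshold is strictly between lo e and hi e
  obtain ⟨ws, hws, hlo', hhi'⟩ : ∃ w : ι → ℝ,
      (∀ f, f ≠ e → w f ∈ Set.Icc (lo f) (hi f)) ∧
      lo e < Thr F w e ∧ Thr F w e < hi e := by
    by_cases hcase : lo e < Thr F w₁ e
    · exact ⟨w₁, hw₁, hcase, ht1⟩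
    push_neg at hcase
    -- interpolate between w₁ and w₂
    set seg : ℝ → ι → ℝ := fun t f => w₁ f + t * (w₂ f - w₁ f) with hsegdef
    have hFmF : (hFmfin.toFinset : Finset (Finset ι)).Nonempty :=
      hFmfin.toFinset_nonempty.mpr hFmne
    have hFpF : (hFpfin.toFinset : Finset (Finset ι)).Nonempty :=
      hFpfin.toFinset_nonempty.mpr hFpne
    have hOPTm : ∀ w : ι → ℝ, OPTm F w e = hFmfin.toFinset.inf' hFmF (cst w) := by
      intro w
      rw [Finset.inf'_eq_csInf_image, OPTm, hFmfin.coe_toFinset]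
    have hOPTp : ∀ w : ι → ℝ,
        OPTp F w e = hFpfin.toFinset.inf' hFpF (fun S => cst w (S.erase e)) := by
      intro w
      rw [Finset.inf'_eq_csInf_image, OPTp, hFpfin.coe_toFinset]
    set g : ℝ → ℝ := fun t => hFmfin.toFinset.inf' hFmF (fun S => cst (seg t) S)
      - hFpfin.toFinset.inf' hFpF (fun S => cst (seg t) (S.erase e)) with hgdef
    have hgThr : ∀ t, g t = Thr F (seg t) e := by
      intro t
      rw [hgdef, Thr, hOPTm, hOPTp]
    have hg : Continuous g := by
      apply Continuous.sub
      · apply Continuous.finset_inf'_apply hFmF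
        intro S _
        exact continuous_finset_sum _ (fun f _ => by fun_prop)
      · apply Continuous.finset_inf'_apply hFpF
        intro S _
        exact continuous_finset_sum _ (fun f _ => by fun_prop)
    have hg0 : g 0 = Thr F w₁ e := by
      rw [hgThr]
      exact Thr_congr F _ _ e (fun f _ => by simp [hsegdef])
    have hg1 : g 1 = Thr F w₂ e := by
      rw [hgThr]
      exact Thr_congr F _ _ e (fun f _ => by simp [hsegdef])
    set c : ℝ := min (Thr F w₂ e) ((lo e + hi e) / 2) with hcdef
    have hc1 : g 0 ≤ c := by
      rw [hg0]
      exact le_min (le_trans hcase ht2.le) (le_trans hcase (by linarith))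
    have hc2 : c ≤ g 1 := by rw [hg1]; exact min_le_left _ _
    obtain ⟨t, ht01, hgt⟩ := intermediate_value_Icc (by norm_num : (0:ℝ) ≤ 1)
      hg.continuousOn ⟨hc1, hc2⟩
    refine ⟨seg t, ?_, ?_, ?_⟩
    · intro f hf
      obtain ⟨ha1, ha2⟩ := hw₁ f hf
      obtain ⟨hb1, hb2⟩ := hw₂ f hf
      obtain ⟨ht0, htone⟩ := ht01
      constructor
      · simp only [hsegdef]; nlinarith
      · simp only [hsegdef]; nlinarith
    · rw [← hgThr, hgt]
      exact lt_min ht2 (by linarith)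
    · rw [← hgThr, hgt]
      exact lt_of_le_of_lt (min_le_right _ _) (by linarith)
  -- Use admissibility with q = ws
  obtain ⟨S, hSF, hopt⟩ := hA ws (fun f hf => hws f (fun h => heA (h ▸ hf)))
  set lo' : ι → ℝ := fun f => if f ∈ A then ws f else lo f with hlo'def
  set hi' : ι → ℝ := fun f => if f ∈ A then ws f else hi f with hhi'def
  by_cases heS : e ∈ S
  · -- e ∈ S: reveal w e = hi e, contradiction with Thr < hi e
    set w : ι → ℝ := Function.update ws e (hi e) with hwdef
    have hwr : Realiz lo' hi' w := by
      intro f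
      by_cases hfe : f = e
      · subst hfe
        simp only [hwdef, Function.update_self, hlo'def, hhi'def, if_neg heA]
        exact ⟨hlh f, le_refl _⟩
      · simp only [hwdef, Function.update_of_ne hfe]
        by_cases hfA : f ∈ A
        · simp only [hlo'def, hhi'def, if_pos hfA]
          exact ⟨le_refl _, le_refl _⟩
        · simp only [hlo'def, hhi'def, if_neg hfA]
          exact hws f hfe
    have hopt' := hopt w hwr
    obtain ⟨Sm, hSm, hSmeq⟩ := (hFmne.image (cst w)).csInf_mem (hFmfin.image _)
    have h1 : cst w S ≤ OPTm F w e := by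
      rw [OPTm, ← hSmeq]
      exact hopt' Sm hSm.1
    have h2 : OPTp F w e ≤ cst w (S.erase e) :=
      csInf_le ((hFpfin.image _).bddBelow) ⟨S, ⟨hSF, heS⟩, rfl⟩
    have h3 : cst w (S.erase e) + w e = cst w S := Finset.sum_erase_add S w heS
    have h4 : w e = hi e := Function.update_self e (hi e) ws
    have h5 : Thr F w e = Thr F ws e :=
      Thr_congr F w ws e (fun f hf => Function.update_of_ne hf _ _)
    have key : hi e ≤ Thr F w e := by rw [Thr]; linarith
    rw [h5] at key
    exact absurd key (not_le.mpr hhi')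
  · -- e ∉ S: reveal w e = lo e, contradiction with lo e < Thr
    set w : ι → ℝ := Function.update ws e (lo e) with hwdef
    have hwr : Realiz lo' hi' w := by
      intro f
      by_cases hfe : f = e
      · subst hfe
        simp only [hwdef, Function.update_self, hlo'def, hhi'def, if_neg heA]
        exact ⟨le_refl _, hlh f⟩
      · simp only [hwdef, Function.update_of_ne hfe]
        by_cases hfA : f ∈ A
        · simp only [hlo'def, hhi'def, if_pos hfA]
          exact ⟨le_refl _, le_refl _⟩
        · simp only [hlo'def, hhi'def, if_neg hfA]
          exact hws f hfe
    have hopt' := hopt w hwr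
    obtain ⟨Sp, hSp, hSpeq⟩ := (hFpne.image (fun S => cst w (S.erase e))).csInf_mem
      (hFpfin.image _)
    have h1 : cst w S ≤ cst w Sp := hopt' Sp hSp.1
    have h2 : OPTm F w e ≤ cst w S :=
      csInf_le ((hFmfin.image _).bddBelow) ⟨S, ⟨hSF, heS⟩, rfl⟩
    have h3 : cst w (Sp.erase e) + w e = cst w Sp := Finset.sum_erase_add Sp w hSp.2
    have h4 : w e = lo e := Function.update_self e (lo e) ws
    have h5 : Thr F w e = Thr F ws e :=
      Thr_congr F w ws e (fun f hf => Function.update_of_ne hf _ _)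
    have h6 : OPTp F w e = cst w (Sp.erase e) := by rw [OPTp, ← hSpeq]
    have key : Thr F w e ≤ lo e := by rw [Thr]; linarith
    rw [h5] at key
    exact absurd key (not_le.mpr hlo')
end

section
/- For every realization w of the uncertainty intervals, there exists a w-optimal feasible set S* that contains every blue element and avoids every red element. -/
private lemma cst_erase_add {ι : Type*} [DecidableEq ι] (w : ι → ℝ) (S : Finset ι)
    {e : ι} (he : e ∈ S) : cst w (S.erase e) + w e = cst w S :=
  Finset.sum_erase_add S w he

private lemma key_blue {ι : Type*} [Fintype ι] [DecidableEq ι]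
    (F : Set (Finset ι)) (lo hi : ι → ℝ)
    (w : ι → ℝ) (hw : Realiz lo hi w) (e : ι)
    (hlt : w e < hi e) (hth : (hi e : EReal) ≤ eTplus F lo hi e)
    (S : Finset ι) (hS : S ∈ F) (hopt : ∀ S' ∈ F, cst w S ≤ cst w S') :
    e ∈ S := by
  by_contra he
  have h1 : eTplus F lo hi e ≤ eThr F w e :=
    sInf_le ⟨w, fun f _ => hw f, rfl⟩
  have h2 : ((w e : ℝ) : EReal) < eThr F w e :=
    lt_of_lt_of_le (by exact_mod_cast hlt) (le_trans hth h1)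
  have hm : eOPTm F w e ≤ ((cst w S : ℝ) : EReal) :=
    sInf_le ⟨S, ⟨hS, he⟩, rfl⟩
  by_cases hP : {S' | S' ∈ F ∧ e ∈ S'}.Nonempty
  · have hPfin : ((fun S => ((cst w (S.erase e) : ℝ) : EReal)) ''
        {S' | S' ∈ F ∧ e ∈ S'}).Finite := Set.toFinite _
    have hPne : ((fun S => ((cst w (S.erase e) : ℝ) : EReal)) ''
        {S' | S' ∈ F ∧ e ∈ S'}).Nonempty := hP.image _
    obtain ⟨T, hT, hTe⟩ := hPne.csInf_mem hPfin
    have hthr : eThr F w e ≤ ((cst w S - cst w (T.erase e) : ℝ) : EReal) := by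
      have hTle : ((cst w (T.erase e) : ℝ) : EReal) ≤ eOPTp F w e := by
        unfold eOPTp; exact le_of_eq hTe
      have : eThr F w e ≤ ((cst w S : ℝ) : EReal) - ((cst w (T.erase e) : ℝ) : EReal) :=
        EReal.sub_le_sub hm hTle
      rwa [← EReal.coe_sub] at this
    have hreal : w e < cst w S - cst w (T.erase e) := by
      have := lt_of_lt_of_le h2 hthr
      exact_mod_cast this
    have : cst w T < cst w S := by
      rw [← cst_erase_add w T hT.2]; linarith
    exact absurd (hopt T hT.1) (not_le.mpr this)
  · have hPe : {S' | S' ∈ F ∧ e ∈ S'} = ∅ := Set.not_nonempty_iff_eq_empty.mp hP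
    have : eThr F w e = ⊥ := by
      unfold eThr eOPTp
      rw [hPe, Set.image_empty, sInf_empty, EReal.sub_top]
    rw [this] at h2
    exact absurd h2 (by simp)

private lemma key_red {ι : Type*} [Fintype ι] [DecidableEq ι]
    (F : Set (Finset ι)) (lo hi : ι → ℝ)
    (w : ι → ℝ) (hw : Realiz lo hi w) (e : ι)
    (hlt : lo e < w e) (hth : eTminus F lo hi e ≤ (lo e : EReal))
    (S : Finset ι) (hS : S ∈ F) (hopt : ∀ S' ∈ F, cst w S ≤ cst w S') :
    e ∉ S := by
  intro he
  have h1 : eThr F w e ≤ eTminus F lo hi e :=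
    le_sSup ⟨w, fun f _ => hw f, rfl⟩
  have h2 : eThr F w e < ((w e : ℝ) : EReal) :=
    lt_of_le_of_lt (le_trans h1 hth) (by exact_mod_cast hlt)
  have hp : eOPTp F w e ≤ ((cst w (S.erase e) : ℝ) : EReal) :=
    sInf_le ⟨S, ⟨hS, he⟩, rfl⟩
  by_cases hP : {S' | S' ∈ F ∧ e ∉ S'}.Nonempty
  · have hPfin : ((fun S => ((cst w S : ℝ) : EReal)) ''
        {S' | S' ∈ F ∧ e ∉ S'}).Finite := Set.toFinite _
    have hPne : ((fun S => ((cst w S : ℝ) : EReal)) ''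
        {S' | S' ∈ F ∧ e ∉ S'}).Nonempty := hP.image _
    obtain ⟨T, hT, hTe⟩ := hPne.csInf_mem hPfin
    have hthr : ((cst w T - cst w (S.erase e) : ℝ) : EReal) ≤ eThr F w e := by
      have hTle : ((cst w T : ℝ) : EReal) ≤ eOPTm F w e := by
        unfold eOPTm; exact le_of_eq hTe
      have : ((cst w T : ℝ) : EReal) - ((cst w (S.erase e) : ℝ) : EReal) ≤ eThr F w e :=
        EReal.sub_le_sub hTle hp
      rwa [← EReal.coe_sub] at this
    have hreal : cst w T - cst w (S.erase e) < w e := by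
      have := lt_of_le_of_lt hthr h2
      exact_mod_cast this
    have : cst w T < cst w S := by
      rw [← cst_erase_add w S he]; linarith
    exact absurd (hopt T hT.1) (not_le.mpr this)
  · have hPe : {S' | S' ∈ F ∧ e ∉ S'} = ∅ := Set.not_nonempty_iff_eq_empty.mp hP
    have hpt : eOPTp F w e = ((cst w (S.erase e) : ℝ) : EReal) ∨
        eOPTp F w e < ((cst w (S.erase e) : ℝ) : EReal) := hp.eq_or_lt
    have hQfin : ((fun S => ((cst w (S.erase e) : ℝ) : EReal)) ''
        {S' | S' ∈ F ∧ e ∈ S'}).Finite := Set.toFinite _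
    have hQne : ((fun S => ((cst w (S.erase e) : ℝ) : EReal)) ''
        {S' | S' ∈ F ∧ e ∈ S'}).Nonempty := ⟨_, ⟨S, ⟨hS, he⟩, rfl⟩⟩
    obtain ⟨T, hT, hTe⟩ := hQne.csInf_mem hQfin
    have : eThr F w e = ⊤ := by
      unfold eThr eOPTm eOPTp
      rw [hPe, Set.image_empty, sInf_empty, ← hTe]
      exact EReal.top_sub_coe _
    rw [this] at h2
    exact absurd h2 (by simp)

/-- For every realization `w` of the uncertainty intervals there exists a
`w`-optimal feasible set containing every blue element and avoiding every red element. -/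
theorem stmt9 {ι : Type*} [Fintype ι] [DecidableEq ι]
    (F : Set (Finset ι)) (hF : F.Nonempty) (lo hi : ι → ℝ) (hlh : ∀ f, lo f ≤ hi f)
    (w : ι → ℝ) (hw : Realiz lo hi w) :
    ∃ S : Finset ι, IsOpt F w S ∧
      (∀ e, Blue F lo hi e → e ∈ S) ∧ (∀ e, Red F lo hi e → e ∉ S) := by
  classical
  have hdisj : ∀ e, Red F lo hi e → ¬ Blue F lo hi e := by
    intro e hR hB
    have h1 : eTplus F lo hi e ≤ eThr F w e := sInf_le ⟨w, fun f _ => hw f, rfl⟩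
    have h2 : eThr F w e ≤ eTminus F lo hi e := le_sSup ⟨w, fun f _ => hw f, rfl⟩
    have h3 : ((hi e : ℝ) : EReal) ≤ ((lo e : ℝ) : EReal) :=
      le_trans hB.2 (le_trans h1 (le_trans h2 hR.2))
    have : hi e ≤ lo e := by exact_mod_cast h3
    linarith [hB.1]
  set d : ι → ℝ := fun f =>
    if Blue F lo hi f then lo f - w f else if Red F lo hi f then hi f - w f else 0 with hd
  have hFfin : F.Finite := Set.toFinite F
  set FF : Finset (Finset ι) := hFfin.toFinset with hFFdef
  have hmem : ∀ S, S ∈ FF ↔ S ∈ F := fun S => hFfin.mem_toFinset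
  have hFF : FF.Nonempty := by
    obtain ⟨S, hS⟩ := hF; exact ⟨S, (hmem S).mpr hS⟩
  obtain ⟨S₀, hS₀, hS₀min⟩ := FF.exists_min_image (fun S => cst w S) hFF
  set M : ℝ := FF.sup' hFF (fun S => |cst d S|) with hM
  have hMb : ∀ S ∈ FF, |cst d S| ≤ M := by
    intro S hS
    rw [hM]
    exact Finset.le_sup' (fun S => |cst d S|) hS
  have hM0 : 0 ≤ M := le_trans (abs_nonneg _) (hMb S₀ hS₀)
  set G : Finset (Finset ι) := FF.filter (fun S => cst w S₀ < cst w S) with hGdef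
  set g : ℝ := if hGn : G.Nonempty then G.inf' hGn (fun S => cst w S - cst w S₀) else 1 with hg
  have hg0 : 0 < g := by
    rw [hg]
    split_ifs with hGn
    · obtain ⟨S, hS, hSe⟩ := Finset.exists_mem_eq_inf' hGn (fun S => cst w S - cst w S₀)
      rw [hSe]
      have := (Finset.mem_filter.mp hS).2
      linarith
    · norm_num
  have hgap : ∀ S ∈ FF, cst w S₀ < cst w S → g ≤ cst w S - cst w S₀ := by
    intro S hS hlt
    have hSG : S ∈ G := Finset.mem_filter.mpr ⟨hS, hlt⟩
    rw [hg]
    split_ifs with hGn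
    · exact Finset.inf'_le _ hSG
    · exact absurd ⟨S, hSG⟩ hGn
  set t : ℝ := min 1 (g / (2*(M+1))) with htdef
  have ht0 : 0 < t := lt_min one_pos (by positivity)
  have ht1 : t ≤ 1 := min_le_left _ _
  have htg : t * (2*(M+1)) ≤ g :=
    (le_div_iff₀ (by positivity : (0:ℝ) < 2*(M+1))).mp (min_le_right _ _)
  set wt : ι → ℝ := fun f => w f + t * d f with hwt
  have hwtf : ∀ f, wt f = w f + t * d f := fun f => rfl
  have hexp : ∀ S : Finset ι, cst wt S = cst w S + t * cst d S := by
    intro S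
    simp [cst, hwtf, Finset.sum_add_distrib, Finset.mul_sum]
  have hwreal : Realiz lo hi wt := by
    intro f
    have h1 := (hw f).1
    have h2 := (hw f).2
    simp only [Set.mem_Icc]
    rw [hwtf f]
    by_cases hB : Blue F lo hi f
    · have hdf : d f = lo f - w f := by rw [hd]; simp [hB]
      rw [hdf]
      constructor <;> nlinarith [mul_nonneg ht0.le (sub_nonneg.mpr h1),
        mul_nonneg (sub_nonneg.mpr ht1) (sub_nonneg.mpr h1)]
    · by_cases hR : Red F lo hi f
      · have hdf : d f = hi f - w f := by rw [hd]; simp [hB, hR]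
        rw [hdf]
        constructor <;> nlinarith [mul_nonneg ht0.le (sub_nonneg.mpr h2),
          mul_nonneg (sub_nonneg.mpr ht1) (sub_nonneg.mpr h2)]
      · have hdf : d f = 0 := by rw [hd]; simp [hB, hR]
        rw [hdf]
        constructor <;> nlinarith
  obtain ⟨S₁, hS₁, hS₁min⟩ := FF.exists_min_image (fun S => cst wt S) hFF
  have hS₁F : S₁ ∈ F := (hmem S₁).mp hS₁
  have hS₁opt : ∀ S' ∈ F, cst w S₁ ≤ cst w S' := by
    have hle : cst w S₁ ≤ cst w S₀ := by
      by_contra hcon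
      push_neg at hcon
      have hgle := hgap S₁ hS₁ hcon
      have h1 : cst wt S₁ ≤ cst wt S₀ := hS₁min S₀ hS₀
      rw [hexp, hexp] at h1
      have b1 := abs_le.mp (hMb S₁ hS₁)
      have b0 := abs_le.mp (hMb S₀ hS₀)
      nlinarith [mul_le_mul_of_nonneg_left b0.2 ht0.le,
        mul_le_mul_of_nonneg_left b1.1 ht0.le, ht0, htg]
    intro S' hS'
    exact le_trans hle (hS₀min S' ((hmem S').mpr hS'))
  have hS₁wtopt : ∀ S' ∈ F, cst wt S₁ ≤ cst wt S' :=
    fun S' hS' => hS₁min S' ((hmem S').mpr hS')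
  refine ⟨S₁, ⟨hS₁F, hS₁opt⟩, ?_, ?_⟩
  · intro e hB
    refine key_blue F lo hi wt hwreal e ?_ hB.2 S₁ hS₁F hS₁wtopt
    have hdf : d e = lo e - w e := by rw [hd]; simp [hB]
    rw [hwtf e, hdf]
    nlinarith [(hw e).1, (hw e).2, hB.1,
      mul_pos ht0 (sub_pos.mpr hB.1),
      mul_nonneg (sub_nonneg.mpr ht1) (sub_nonneg.mpr (hw e).2)]
  · intro e hR
    refine key_red F lo hi wt hwreal e ?_ hR.2 S₁ hS₁F hS₁wtopt
    have hdf : d e = hi e - w e := by rw [hd]; simp [hdisj e hR, hR]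
    rw [hwtf e, hdf]
    nlinarith [(hw e).1, (hw e).2, hR.1,
      mul_pos ht0 (sub_pos.mpr hR.1),
      mul_nonneg (sub_nonneg.mpr ht1) (sub_nonneg.mpr (hw e).1)]
end

section
/- The set Q of uncolored non-trivial elements is an admissible query; together with Lemma 'admissible queries contain Q', Q is the unique inclusion-minimal admissible query, hence it is a minimum-cost admissible query for any nonnegative cost function. -/
open scoped Classical in
/-- The set of uncolored non-trivial elements. -/
noncomputable def Quncol {ι : Type*} [Fintype ι] [DecidableEq ι]
    (F : Set (Finset ι)) (lo hi : ι → ℝ) : Finset ι :=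
  Finset.univ.filter fun e => lo e < hi e ∧ ¬ Blue F lo hi e ∧ ¬ Red F lo hi e

section helpers
variable {ι : Type*} [Fintype ι] [DecidableEq ι]

lemma exists_eOPTm (F : Set (Finset ι)) (w : ι → ℝ) (e : ι)
    (hne : ∃ S ∈ F, e ∉ S) :
    ∃ S₀ ∈ F, e ∉ S₀ ∧ eOPTm F w e = ((cst w S₀ : ℝ) : EReal) ∧
      ∀ S ∈ F, e ∉ S → cst w S₀ ≤ cst w S := by
  classical
  have hfin : {S : Finset ι | S ∈ F ∧ e ∉ S}.Finite := Set.toFinite _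
  have hsne : hfin.toFinset.Nonempty := by
    obtain ⟨S, hS, hSe⟩ := hne
    exact ⟨S, by simp [Set.Finite.mem_toFinset]; exact ⟨hS, hSe⟩⟩
  obtain ⟨S₀, hS₀, hmin⟩ := hfin.toFinset.exists_min_image (cst w) hsne
  have hS₀' : S₀ ∈ F ∧ e ∉ S₀ := by simpa [Set.Finite.mem_toFinset] using hS₀
  refine ⟨S₀, hS₀'.1, hS₀'.2, ?_, fun S hS hSe =>
    hmin S (by simp [Set.Finite.mem_toFinset]; exact ⟨hS, hSe⟩)⟩
  apply le_antisymm
  · exact sInf_le ⟨S₀, ⟨hS₀'.1, hS₀'.2⟩, rfl⟩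
  · apply le_sInf
    rintro t ⟨S, hSmem, rfl⟩
    exact EReal.coe_le_coe_iff.mpr
      (hmin S (by simp [Set.Finite.mem_toFinset]; exact hSmem))

lemma exists_eOPTp (F : Set (Finset ι)) (w : ι → ℝ) (e : ι)
    (hne : ∃ S ∈ F, e ∈ S) :
    ∃ S₀ ∈ F, e ∈ S₀ ∧ eOPTp F w e = ((cst w (S₀.erase e) : ℝ) : EReal) ∧
      ∀ S ∈ F, e ∈ S → cst w (S₀.erase e) ≤ cst w (S.erase e) := by
  classical
  have hfin : {S : Finset ι | S ∈ F ∧ e ∈ S}.Finite := Set.toFinite _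
  have hsne : hfin.toFinset.Nonempty := by
    obtain ⟨S, hS, hSe⟩ := hne
    exact ⟨S, by simp [Set.Finite.mem_toFinset]; exact ⟨hS, hSe⟩⟩
  obtain ⟨S₀, hS₀, hmin⟩ := hfin.toFinset.exists_min_image (fun S => cst w (S.erase e)) hsne
  have hS₀' : S₀ ∈ F ∧ e ∈ S₀ := by simpa [Set.Finite.mem_toFinset] using hS₀
  refine ⟨S₀, hS₀'.1, hS₀'.2, ?_, fun S hS hSe =>
    hmin S (by simp [Set.Finite.mem_toFinset]; exact ⟨hS, hSe⟩)⟩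
  apply le_antisymm
  · exact sInf_le ⟨S₀, ⟨hS₀'.1, hS₀'.2⟩, rfl⟩
  · apply le_sInf
    rintro t ⟨S, hSmem, rfl⟩
    exact EReal.coe_le_coe_iff.mpr
      (hmin S (by simp [Set.Finite.mem_toFinset]; exact hSmem))

lemma eOPTm_top (F : Set (Finset ι)) (w : ι → ℝ) (e : ι)
    (h : ∀ S ∈ F, e ∈ S) : eOPTm F w e = ⊤ := by
  have hempty : {S : Finset ι | S ∈ F ∧ e ∉ S} = ∅ := by
    ext S; simp only [Set.mem_setOf_eq, Set.mem_empty_iff_false, iff_false, not_and, not_not]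
    exact h S
  rw [eOPTm, hempty, Set.image_empty, sInf_empty]

lemma eOPTp_top (F : Set (Finset ι)) (w : ι → ℝ) (e : ι)
    (h : ∀ S ∈ F, e ∉ S) : eOPTp F w e = ⊤ := by
  have hempty : {S : Finset ι | S ∈ F ∧ e ∈ S} = ∅ := by
    ext S; simp only [Set.mem_setOf_eq, Set.mem_empty_iff_false, iff_false, not_and]
    exact h S
  rw [eOPTp, hempty, Set.image_empty, sInf_empty]

lemma force_out (F : Set (Finset ι)) (hF : F.Nonempty) (w : ι → ℝ) (e : ι)
    (h : eThr F w e < ((w e : ℝ) : EReal)) (S : Finset ι) (hS : S ∈ F)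
    (hopt : ∀ S' ∈ F, cst w S ≤ cst w S') : e ∉ S := by
  by_cases hp : ∃ S' ∈ F, e ∈ S'
  · by_cases hm : ∃ S' ∈ F, e ∉ S'
    · obtain ⟨Sm, hSmF, hSme, hEqm, hminm⟩ := exists_eOPTm F w e hm
      obtain ⟨Sp, hSpF, hSpe, hEqp, hminp⟩ := exists_eOPTp F w e hp
      rw [eThr, hEqm, hEqp, ← EReal.coe_sub] at h
      have h' : cst w Sm - cst w (Sp.erase e) < w e := EReal.coe_lt_coe_iff.mp h
      intro heS
      have h1 : cst w S ≤ cst w Sm := hopt Sm hSmF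
      have h2 : cst w (Sp.erase e) ≤ cst w (S.erase e) := hminp S hS heS
      have h3 : cst w (S.erase e) + w e = cst w S := Finset.sum_erase_add S w heS
      linarith
    · push_neg at hm
      obtain ⟨Sp, hSpF, hSpe, hEqp, -⟩ := exists_eOPTp F w e hp
      rw [eThr, eOPTm_top F w e hm, hEqp, EReal.top_sub_coe] at h
      exact absurd h (not_lt.mpr le_top)
  · push_neg at hp
    exact hp S hS

lemma force_in (F : Set (Finset ι)) (hF : F.Nonempty) (w : ι → ℝ) (e : ι)
    (h : ((w e : ℝ) : EReal) < eThr F w e) (S : Finset ι) (hS : S ∈ F)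
    (hopt : ∀ S' ∈ F, cst w S ≤ cst w S') : e ∈ S := by
  by_cases hp : ∃ S' ∈ F, e ∈ S'
  · by_cases hm : ∃ S' ∈ F, e ∉ S'
    · obtain ⟨Sm, hSmF, hSme, hEqm, hminm⟩ := exists_eOPTm F w e hm
      obtain ⟨Sp, hSpF, hSpe, hEqp, hminp⟩ := exists_eOPTp F w e hp
      rw [eThr, hEqm, hEqp, ← EReal.coe_sub] at h
      have h' : w e < cst w Sm - cst w (Sp.erase e) := EReal.coe_lt_coe_iff.mp h
      by_contra heS
      have h1 : cst w S ≤ cst w Sp := hopt Sp hSpF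
      have h2 : cst w Sm ≤ cst w S := hminm S hS heS
      have h3 : cst w (Sp.erase e) + w e = cst w Sp := Finset.sum_erase_add Sp w hSpe
      linarith
    · push_neg at hm
      exact hm S hS
  · push_neg at hp
    obtain ⟨Sm, hSmF, hSme, hEqm, -⟩ := exists_eOPTm F w e
      ⟨hF.choose, hF.choose_spec, hp _ hF.choose_spec⟩
    have hbot : eThr F w e = ⊥ := by
      rw [eThr, eOPTp_top F w e hp, hEqm]
      simp
    rw [hbot] at h
    exact absurd h (not_lt.mpr bot_le)

lemma eThr_congr (F : Set (Finset ι)) (w w' : ι → ℝ) (e : ι)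
    (h : ∀ g, g ≠ e → w g = w' g) : eThr F w e = eThr F w' e := by
  have hm : eOPTm F w e = eOPTm F w' e := by
    unfold eOPTm
    congr 1
    apply Set.image_congr
    rintro S ⟨hSF, hSe⟩
    have : cst w S = cst w' S := by
      apply Finset.sum_congr rfl
      intro g hg
      exact h g (fun hge => hSe (hge ▸ hg))
    rw [this]
  have hp : eOPTp F w e = eOPTp F w' e := by
    unfold eOPTp
    congr 1
    apply Set.image_congr
    rintro S ⟨hSF, hSe⟩
    have : cst w (S.erase e) = cst w' (S.erase e) := by
      apply Finset.sum_congr rfl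
      intro g hg
      exact h g (Finset.ne_of_mem_erase hg)
    rw [this]
  rw [eThr, hm, hp, eThr]
end helpers

section main
variable {ι : Type*} [Fintype ι] [DecidableEq ι]

lemma blue_red_exclusive (F : Set (Finset ι)) (lo hi : ι → ℝ) (hlh : ∀ f, lo f ≤ hi f)
    (e : ι) : ¬(Blue F lo hi e ∧ Red F lo hi e) := by
  rintro ⟨⟨hlt, hb⟩, ⟨-, hr⟩⟩
  have hmem : eThr F lo e ∈
      {t | ∃ w : ι → ℝ, (∀ f, f ≠ e → w f ∈ Set.Icc (lo f) (hi f)) ∧ t = eThr F w e} :=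
    ⟨lo, fun g _ => ⟨le_refl _, hlh g⟩, rfl⟩
  have h1 : eTplus F lo hi e ≤ eThr F lo e := sInf_le hmem
  have h2 : eThr F lo e ≤ eTminus F lo hi e := le_sSup hmem
  have : (hi e : EReal) ≤ (lo e : EReal) := hb.trans (h1.trans (h2.trans hr))
  exact absurd (EReal.coe_le_coe_iff.mp this) (not_le.mpr hlt)

lemma core (F : Set (Finset ι)) (hF : F.Nonempty) (lo hi : ι → ℝ) (hlh : ∀ f, lo f ≤ hi f)
    (hcol : ∀ f, lo f < hi f → Blue F lo hi f ∨ Red F lo hi f) :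
    ∃ S, UnivOptSol F lo hi S := by
  classical
  set c : ℝ := (Fintype.card ι : ℝ) with hc
  have hc0 : 0 ≤ c := Nat.cast_nonneg _
  have hFfin : F.Finite := Set.toFinite F
  have hFFne : hFfin.toFinset.Nonempty := by
    obtain ⟨S, hS⟩ := hF
    exact ⟨S, (Set.Finite.mem_toFinset hFfin).mpr hS⟩
  set Gp : Finset ℝ := ((hFfin.toFinset ×ˢ hFfin.toFinset).image
      fun p => (∑ x ∈ p.1 \ p.2, hi x) - ∑ x ∈ p.2 \ p.1, lo x).filter (fun x => 0 < x) with hGp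
  set Gw : Finset ℝ :=
      (Finset.univ.filter fun f : ι => lo f < hi f).image fun f => hi f - lo f with hGw
  set G : Finset ℝ := insert 1 (Gp ∪ Gw) with hG
  have hGne : G.Nonempty := ⟨1, Finset.mem_insert_self _ _⟩
  set δ := G.min' hGne with hδ
  have hGpos : ∀ x ∈ G, 0 < x := by
    intro x hx
    rw [hG] at hx
    rcases Finset.mem_insert.mp hx with h | h
    · rw [h]; norm_num
    · rcases Finset.mem_union.mp h with h | h
      · exact (Finset.mem_filter.mp h).2
      · obtain ⟨f, hf, hEq⟩ := Finset.mem_image.mp h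
        have := (Finset.mem_filter.mp hf).2
        rw [← hEq]; linarith
  have hδpos : 0 < δ := hGpos _ (G.min'_mem hGne)
  set ε := δ / (2 * c + 2) with hε
  have hden : 0 < 2 * c + 2 := by linarith
  have hεpos : 0 < ε := div_pos hδpos hden
  have heq : ε * (2 * c + 2) = δ := by
    rw [hε]; field_simp
  have hεδ : ε ≤ δ := by nlinarith [mul_nonneg hεpos.le hc0]
  have hεlt : 2 * ε * c < δ := by nlinarith
  have hwid : ∀ f, lo f < hi f → ε ≤ hi f - lo f := by
    intro f hf
    have hmem : hi f - lo f ∈ G := by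
      rw [hG]
      apply Finset.mem_insert_of_mem
      apply Finset.mem_union_right
      exact Finset.mem_image.mpr ⟨f, Finset.mem_filter.mpr ⟨Finset.mem_univ f, hf⟩, rfl⟩
    exact hεδ.trans (G.min'_le _ hmem)
  set v : ι → ℝ := fun g =>
    if Blue F lo hi g then hi g - ε else if Red F lo hi g then lo g + ε else lo g with hv
  have hvreal : Realiz lo hi v := by
    intro g
    by_cases hb : Blue F lo hi g
    · have := hwid g hb.1
      simp only [hv, if_pos hb]
      constructor <;> [linarith; linarith]
    · by_cases hr : Red F lo hi g
      · have := hwid g hr.1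
        simp only [hv, if_neg hb, if_pos hr]
        constructor <;> [linarith; linarith]
      · simp only [hv, if_neg hb, if_neg hr]
        exact ⟨le_refl _, hlh g⟩
  obtain ⟨S, hSFF, hSmin⟩ := hFfin.toFinset.exists_min_image (cst v) hFFne
  have hSF : S ∈ F := (Set.Finite.mem_toFinset hFfin).mp hSFF
  have hSopt : ∀ S' ∈ F, cst v S ≤ cst v S' := fun S' hS' =>
    hSmin S' ((Set.Finite.mem_toFinset hFfin).mpr hS')
  have hBin : ∀ f, Blue F lo hi f → f ∈ S := by
    intro f hb
    apply force_in F hF v f ?_ S hSF hSopt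
    have hmem1 : eTplus F lo hi f ≤ eThr F v f :=
      sInf_le ⟨v, fun g _ => hvreal g, rfl⟩
    have h1 : (hi f : EReal) ≤ eThr F v f := hb.2.trans hmem1
    have h2 : ((v f : ℝ) : EReal) < ((hi f : ℝ) : EReal) := by
      have hvf : v f = hi f - ε := if_pos hb
      rw [hvf]
      exact_mod_cast (by linarith : hi f - ε < hi f)
    exact h2.trans_le h1
  have hRout : ∀ f, Red F lo hi f → f ∉ S := by
    intro f hr
    apply force_out F hF v f ?_ S hSF hSopt
    have hb : ¬ Blue F lo hi f := fun hb => blue_red_exclusive F lo hi hlh f ⟨hb, hr⟩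
    have hmem1 : eThr F v f ≤ eTminus F lo hi f :=
      le_sSup ⟨v, fun g _ => hvreal g, rfl⟩
    have h1 : eThr F v f ≤ (lo f : EReal) := hmem1.trans hr.2
    have h2 : ((lo f : ℝ) : EReal) < ((v f : ℝ) : EReal) := by
      have hvf : v f = lo f + ε := by rw [hv]; simp only [if_neg hb, if_pos hr]
      rw [hvf]
      exact_mod_cast (by linarith : lo f < lo f + ε)
    exact h1.trans_lt h2
  have hhiv : ∀ f ∈ S, hi f ≤ v f + ε := by
    intro f hf
    by_cases hb : Blue F lo hi f
    · have hvf : v f = hi f - ε := if_pos hb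
      rw [hvf]; linarith
    · by_cases hr : Red F lo hi f
      · exact absurd hf (hRout f hr)
      · have hvf : v f = lo f := by rw [hv]; simp only [if_neg hb, if_neg hr]
        rcases lt_or_ge (lo f) (hi f) with h | h
        · exact ((hcol f h).elim (absurd · hb) (absurd · hr))
        · rw [hvf]; linarith
  have hlov : ∀ f, f ∉ S → v f ≤ lo f + ε := by
    intro f hf
    by_cases hb : Blue F lo hi f
    · exact absurd (hBin f hb) hf
    · by_cases hr : Red F lo hi f
      · have hvf : v f = lo f + ε := by rw [hv]; simp only [if_neg hb, if_pos hr]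
        rw [hvf]
      · have hvf : v f = lo f := by rw [hv]; simp only [if_neg hb, if_neg hr]
        rw [hvf]; linarith
  have key : ∀ S' ∈ F, (∑ x ∈ S \ S', hi x) ≤ ∑ x ∈ S' \ S, lo x := by
    intro S' hS'
    by_contra hcon
    push_neg at hcon
    have hmemG : ((∑ x ∈ S \ S', hi x) - ∑ x ∈ S' \ S, lo x) ∈ G := by
      rw [hG]
      apply Finset.mem_insert_of_mem
      apply Finset.mem_union_left
      rw [hGp]
      refine Finset.mem_filter.mpr ⟨?_, by linarith⟩
      exact Finset.mem_image.mpr ⟨(S, S'), Finset.mem_product.mpr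
        ⟨hSFF, (Set.Finite.mem_toFinset hFfin).mpr hS'⟩, rfl⟩
    have hδle := G.min'_le _ hmemG
    have h1 : (∑ x ∈ S \ S', hi x) ≤ (∑ x ∈ S \ S', v x) + ε * ((S \ S').card : ℝ) := by
      have hle : ∀ x ∈ S \ S', hi x ≤ v x + ε :=
        fun x hx => hhiv x (Finset.mem_sdiff.mp hx).1
      calc (∑ x ∈ S \ S', hi x) ≤ ∑ x ∈ S \ S', (v x + ε) := Finset.sum_le_sum hle
        _ = (∑ x ∈ S \ S', v x) + ε * ((S \ S').card : ℝ) := by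
            rw [Finset.sum_add_distrib, Finset.sum_const, nsmul_eq_mul, mul_comm]
    have h2 : (∑ x ∈ S' \ S, v x) ≤ (∑ x ∈ S' \ S, lo x) + ε * ((S' \ S).card : ℝ) := by
      have hle : ∀ x ∈ S' \ S, v x ≤ lo x + ε :=
        fun x hx => hlov x (Finset.mem_sdiff.mp hx).2
      calc (∑ x ∈ S' \ S, v x) ≤ ∑ x ∈ S' \ S, (lo x + ε) := Finset.sum_le_sum hle
        _ = (∑ x ∈ S' \ S, lo x) + ε * ((S' \ S).card : ℝ) := by
            rw [Finset.sum_add_distrib, Finset.sum_const, nsmul_eq_mul, mul_comm]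
    have h3 : (∑ x ∈ S \ S', v x) ≤ ∑ x ∈ S' \ S, v x := by
      have hA := Finset.sum_inter_add_sum_sdiff S S' v
      have hB := Finset.sum_inter_add_sum_sdiff S' S v
      rw [Finset.inter_comm] at hB
      have hle := hSopt S' hS'
      unfold cst at hle
      linarith
    have hcard1 : ((S \ S').card : ℝ) ≤ c := by
      rw [hc]; exact_mod_cast Finset.card_le_univ _
    have hcard2 : ((S' \ S).card : ℝ) ≤ c := by
      rw [hc]; exact_mod_cast Finset.card_le_univ _
    nlinarith [mul_le_mul_of_nonneg_left hcard1 hεpos.le,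
      mul_le_mul_of_nonneg_left hcard2 hεpos.le]
  refine ⟨S, hSF, ?_⟩
  intro w hw S' hS'
  have e1 : (∑ x ∈ S \ S', w x) ≤ ∑ x ∈ S \ S', hi x :=
    Finset.sum_le_sum fun x _ => (hw x).2
  have e2 : (∑ x ∈ S' \ S, lo x) ≤ ∑ x ∈ S' \ S, w x :=
    Finset.sum_le_sum fun x _ => (hw x).1
  have hA := Finset.sum_inter_add_sum_sdiff S S' w
  have hB := Finset.sum_inter_add_sum_sdiff S' S w
  rw [Finset.inter_comm] at hB
  have hk := key S' hS'
  unfold cst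
  linarith
end main
/-- The set `Q` of uncolored non-trivial elements is an admissible query;
moreover every admissible query contains `Q`, so `Q` is the unique inclusion-minimal
admissible query, and hence a minimum-cost admissible query for every nonnegative cost
function. -/
theorem stmt10 {ι : Type*} [Fintype ι] [DecidableEq ι]
    (F : Set (Finset ι)) (hF : F.Nonempty) (lo hi : ι → ℝ) (hlh : ∀ f, lo f ≤ hi f) :
    Admissible F lo hi (Quncol F lo hi) ∧
    (∀ A : Finset ι, Admissible F lo hi A → Quncol F lo hi ⊆ A) ∧
    (∀ c : ι → ℝ, (∀ e, 0 ≤ c e) →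
      ∀ A : Finset ι, Admissible F lo hi A →
        ∑ e ∈ Quncol F lo hi, c e ≤ ∑ e ∈ A, c e) := by
  classical
  have hpart1 : Admissible F lo hi (Quncol F lo hi) := by
    intro q hq
    set Q := Quncol F lo hi with hQ
    set lo' : ι → ℝ := fun f => if f ∈ Q then q f else lo f with hlo'
    set hi' : ι → ℝ := fun f => if f ∈ Q then q f else hi f with hhi'
    have hsub : ∀ g, Set.Icc (lo' g) (hi' g) ⊆ Set.Icc (lo g) (hi g) := by
      intro g
      by_cases hgQ : g ∈ Q
      · intro x hx
        rw [hlo'] at hx; rw [hhi'] at hx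
        simp only [if_pos hgQ] at hx
        exact ⟨le_trans (hq g hgQ).1 hx.1, le_trans hx.2 (hq g hgQ).2⟩
      · intro x hx
        rw [hlo'] at hx; rw [hhi'] at hx
        simpa only [if_neg hgQ] using hx
    have hmono : ∀ e : ι,
        {t | ∃ w : ι → ℝ, (∀ f, f ≠ e → w f ∈ Set.Icc (lo' f) (hi' f)) ∧ t = eThr F w e} ⊆
        {t | ∃ w : ι → ℝ, (∀ f, f ≠ e → w f ∈ Set.Icc (lo f) (hi f)) ∧ t = eThr F w e} := by
      rintro e t ⟨w, hw, rfl⟩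
      exact ⟨w, fun f hf => hsub f (hw f hf), rfl⟩
    apply core F hF lo' hi'
    · intro f
      by_cases hfQ : f ∈ Q
      · rw [hlo', hhi']; simp only [if_pos hfQ]; exact le_refl _
      · rw [hlo', hhi']; simp only [if_neg hfQ]; exact hlh f
    · intro f hf
      have hfQ : f ∉ Q := by
        intro h
        rw [hlo', hhi'] at hf
        simp only [if_pos h] at hf
        exact lt_irrefl _ hf
      have hlof : lo' f = lo f := by rw [hlo']; simp only [if_neg hfQ]
      have hhif : hi' f = hi f := by rw [hhi']; simp only [if_neg hfQ]
      have hnt : lo f < hi f := by rwa [hlof, hhif] at hf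
      have hcolor : Blue F lo hi f ∨ Red F lo hi f := by
        by_contra hcon
        push_neg at hcon
        apply hfQ
        rw [hQ, Quncol]
        simp only [Finset.mem_filter, Finset.mem_univ, true_and]
        exact ⟨hnt, hcon.1, hcon.2⟩
      rcases hcolor with hb | hr
      · left
        refine ⟨hf, ?_⟩
        rw [hhif]
        have h2 : eTplus F lo hi f ≤ eTplus F lo' hi' f := sInf_le_sInf (hmono f)
        exact hb.2.trans h2
      · right
        refine ⟨hf, ?_⟩
        rw [hlof]
        have h2 : eTminus F lo' hi' f ≤ eTminus F lo hi f := sSup_le_sSup (hmono f)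
        exact h2.trans hr.2
  have hpart2 : ∀ A : Finset ι, Admissible F lo hi A → Quncol F lo hi ⊆ A := by
    intro A hA f hfQ
    by_contra hfA
    rw [Quncol] at hfQ
    simp only [Finset.mem_filter, Finset.mem_univ, true_and] at hfQ
    obtain ⟨hnt, hnb, hnr⟩ := hfQ
    have hTp : eTplus F lo hi f < ((hi f : ℝ) : EReal) :=
      not_le.mp (fun h => hnb ⟨hnt, h⟩)
    have hTm : ((lo f : ℝ) : EReal) < eTminus F lo hi f :=
      not_le.mp (fun h => hnr ⟨hnt, h⟩)
    rw [eTplus] at hTp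
    rw [eTminus] at hTm
    obtain ⟨t1, ht1mem, ht1lt⟩ := sInf_lt_iff.mp hTp
    obtain ⟨w1, hw1c, ht1eq⟩ := ht1mem
    subst ht1eq
    obtain ⟨t2, ht2mem, ht2lt⟩ := lt_sSup_iff.mp hTm
    obtain ⟨w2, hw2c, ht2eq⟩ := ht2mem
    subst ht2eq
    -- full realizations agreeing with w1, w2 off f
    set w1' : ι → ℝ := Function.update w1 f (lo f) with hw1'def
    set w2' : ι → ℝ := Function.update w2 f (lo f) with hw2'def
    have hw1real : Realiz lo hi w1' := by
      intro g
      by_cases hg : g = f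
      · subst hg; rw [hw1'def, Function.update_self]; exact ⟨le_refl _, hlh g⟩
      · rw [hw1'def, Function.update_of_ne hg]; exact hw1c g hg
    have hw2real : Realiz lo hi w2' := by
      intro g
      by_cases hg : g = f
      · subst hg; rw [hw2'def, Function.update_self]; exact ⟨le_refl _, hlh g⟩
      · rw [hw2'def, Function.update_of_ne hg]; exact hw2c g hg
    have hThr1 : eThr F w1' f = eThr F w1 f :=
      eThr_congr F w1' w1 f (fun g hg => by rw [hw1'def, Function.update_of_ne hg])
    have hThr2 : eThr F w2' f = eThr F w2 f :=
      eThr_congr F w2' w2 f (fun g hg => by rw [hw2'def, Function.update_of_ne hg])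
    -- nonemptiness of both sides
    have hFm : ∃ S ∈ F, f ∉ S := by
      by_contra hcon
      push_neg at hcon
      obtain ⟨Sp, hSpF, hSpe, hEqp, -⟩ := exists_eOPTp F w1 f
        ⟨hF.choose, hF.choose_spec, hcon _ hF.choose_spec⟩
      have htop : eThr F w1 f = ⊤ := by
        rw [eThr, eOPTm_top F w1 f hcon, hEqp, EReal.top_sub_coe]
      rw [htop] at ht1lt
      exact absurd ht1lt (not_lt.mpr le_top)
    have hFp : ∃ S ∈ F, f ∈ S := by
      by_contra hcon
      push_neg at hcon
      obtain ⟨Sm, hSmF, hSme, hEqm, -⟩ := exists_eOPTm F w2 f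
        ⟨hF.choose, hF.choose_spec, hcon _ hF.choose_spec⟩
      have hbot : eThr F w2 f = ⊥ := by
        rw [eThr, eOPTp_top F w2 f hcon, hEqm]
        simp
      rw [hbot] at ht2lt
      exact absurd ht2lt (not_lt.mpr bot_le)
    have hfinm : {S : Finset ι | S ∈ F ∧ f ∉ S}.Finite := Set.toFinite _
    have hfinp : {S : Finset ι | S ∈ F ∧ f ∈ S}.Finite := Set.toFinite _
    have hsmne : hfinm.toFinset.Nonempty := by
      obtain ⟨S0, hS0, hS0f⟩ := hFm
      exact ⟨S0, by simp [Set.Finite.mem_toFinset]; exact ⟨hS0, hS0f⟩⟩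
    have hspne : hfinp.toFinset.Nonempty := by
      obtain ⟨S0, hS0, hS0f⟩ := hFp
      exact ⟨S0, by simp [Set.Finite.mem_toFinset]; exact ⟨hS0, hS0f⟩⟩
    have hThrTf : ∀ w : ι → ℝ, eThr F w f =
        (((hfinm.toFinset.inf' hsmne fun S => cst w S) -
          hfinp.toFinset.inf' hspne fun S => cst w (S.erase f) : ℝ) : EReal) := by
      intro w
      have hm : eOPTm F w f =
          (((hfinm.toFinset.inf' hsmne fun S => cst w S : ℝ)) : EReal) := by
        apply le_antisymm
        · obtain ⟨S₀, hS₀, hEq⟩ := Finset.exists_mem_eq_inf' hsmne (fun S => cst w S)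
          rw [hEq]
          exact sInf_le ⟨S₀, (Set.Finite.mem_toFinset hfinm).mp hS₀, rfl⟩
        · apply le_sInf
          rintro t ⟨S, hSmem, rfl⟩
          exact EReal.coe_le_coe_iff.mpr
            (Finset.inf'_le _ ((Set.Finite.mem_toFinset hfinm).mpr hSmem))
      have hp : eOPTp F w f =
          (((hfinp.toFinset.inf' hspne fun S => cst w (S.erase f) : ℝ)) : EReal) := by
        apply le_antisymm
        · obtain ⟨S₀, hS₀, hEq⟩ := Finset.exists_mem_eq_inf' hspne (fun S => cst w (S.erase f))
          rw [hEq]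
          exact sInf_le ⟨S₀, (Set.Finite.mem_toFinset hfinp).mp hS₀, rfl⟩
        · apply le_sInf
          rintro t ⟨S, hSmem, rfl⟩
          exact EReal.coe_le_coe_iff.mpr
            (Finset.inf'_le _ ((Set.Finite.mem_toFinset hfinp).mpr hSmem))
      rw [eThr, hm, hp, ← EReal.coe_sub]
    set path : ℝ → ι → ℝ := fun t g => w1' g + t * (w2' g - w1' g) with hpathdef
    set φ : ℝ → ℝ := fun t =>
      (hfinm.toFinset.inf' hsmne fun S => cst (path t) S) -
        hfinp.toFinset.inf' hspne fun S => cst (path t) (S.erase f) with hφdef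
    have hThrφ : ∀ t, eThr F (path t) f = ((φ t : ℝ) : EReal) := fun t => hThrTf (path t)
    have hpath0 : path 0 = w1' := by
      funext g; rw [hpathdef]; ring
    have hpath1 : path 1 = w2' := by
      funext g; rw [hpathdef]; ring
    have hpathreal : ∀ t ∈ Set.Icc (0:ℝ) 1, Realiz lo hi (path t) := by
      rintro t ⟨h0, h1⟩ g
      have ha := hw1real g
      have hb := hw2real g
      constructor
      · show lo g ≤ w1' g + t * (w2' g - w1' g)
        nlinarith [ha.1, hb.1]
      · show w1' g + t * (w2' g - w1' g) ≤ hi g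
        nlinarith [ha.2, hb.2]
    have hcont : Continuous φ := by
      rw [hφdef]
      apply Continuous.sub
      · apply Continuous.finset_inf'_apply hsmne
        intro S _
        unfold cst
        apply continuous_finset_sum
        intro g _
        rw [hpathdef]
        exact continuous_const.add (continuous_id.mul continuous_const)
      · apply Continuous.finset_inf'_apply hspne
        intro S _
        unfold cst
        apply continuous_finset_sum
        intro g _
        rw [hpathdef]
        exact continuous_const.add (continuous_id.mul continuous_const)
    have hφ0 : φ 0 < hi f := by
      have h := hThrφ 0
      rw [hpath0, hThr1] at h
      rw [h] at ht1lt
      exact EReal.coe_lt_coe_iff.mp ht1lt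
    have hφ1 : lo f < φ 1 := by
      have h := hThrφ 1
      rw [hpath1, hThr2] at h
      rw [h] at ht2lt
      exact EReal.coe_lt_coe_iff.mp ht2lt
    have hstar : ∃ t ∈ Set.Icc (0:ℝ) 1, lo f < φ t ∧ φ t < hi f := by
      rcases lt_or_ge (lo f) (φ 0) with h | h
      · exact ⟨0, ⟨le_refl _, zero_le_one⟩, h, hφ0⟩
      · rcases lt_or_ge (φ 1) (hi f) with h' | h'
        · exact ⟨1, ⟨zero_le_one, le_refl _⟩, hφ1, h'⟩
        · have hIVT := intermediate_value_Icc (zero_le_one (α := ℝ)) hcont.continuousOn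
          have hmid : (lo f + hi f) / 2 ∈ Set.Icc (φ 0) (φ 1) :=
            ⟨h.trans (by linarith), ((by linarith : (lo f + hi f) / 2 ≤ hi f)).trans h'⟩
          obtain ⟨t, htI, hEq⟩ := hIVT hmid
          refine ⟨t, htI, ?_, ?_⟩ <;> rw [hEq] <;> linarith
    obtain ⟨tstar, htI, hlt1, hlt2⟩ := hstar
    have hwstreal : Realiz lo hi (path tstar) := hpathreal tstar htI
    obtain ⟨S, hSF, hSopt⟩ := hA (path tstar) (fun g _ => hwstreal g)
    have hout : f ∉ S := by
      apply force_out F hF (Function.update (path tstar) f (hi f)) f ?_ S hSF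
      · intro S' hS'
        apply hSopt
        · intro g
          by_cases hg : g = f
          · subst hg
            rw [Function.update_self]
            simp only [hfA, if_false]
            exact ⟨hlh g, le_refl _⟩
          · rw [Function.update_of_ne hg]
            by_cases hgA : g ∈ A
            · simp only [hgA, if_true]
              exact ⟨le_refl _, le_refl _⟩
            · simp only [hgA, if_false]
              exact hwstreal g
        · exact hS'
      · have hthr : eThr F (Function.update (path tstar) f (hi f)) f = eThr F (path tstar) f :=
          eThr_congr F _ _ f (fun g hg => Function.update_of_ne hg _ _)
        rw [hthr, hThrφ tstar, Function.update_self]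
        exact EReal.coe_lt_coe_iff.mpr hlt2
    have hin : f ∈ S := by
      apply force_in F hF (Function.update (path tstar) f (lo f)) f ?_ S hSF
      · intro S' hS'
        apply hSopt
        · intro g
          by_cases hg : g = f
          · subst hg
            rw [Function.update_self]
            simp only [hfA, if_false]
            exact ⟨le_refl _, hlh g⟩
          · rw [Function.update_of_ne hg]
            by_cases hgA : g ∈ A
            · simp only [hgA, if_true]
              exact ⟨le_refl _, le_refl _⟩
            · simp only [hgA, if_false]
              exact hwstreal g
        · exact hS'
      · have hthr : eThr F (Function.update (path tstar) f (lo f)) f = eThr F (path tstar) f :=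
          eThr_congr F _ _ f (fun g hg => Function.update_of_ne hg _ _)
        rw [hthr, hThrφ tstar, Function.update_self]
        exact EReal.coe_lt_coe_iff.mpr hlt1
    exact hout hin
  exact ⟨hpart1, hpart2, fun c hc A hA =>
    Finset.sum_le_sum_of_subset_of_nonneg (hpart2 A hA) (fun i _ _ => hc i)⟩
end

section
/- Let M be a large constant exceeding the total absolute weight bounds, and suppose after querying Q (the uncolored non-trivial elements) we modify weights by setting w_e = −M for blue elements and w_e = +M for red elements (keeping revealed/trivial weights). Then any feasible set S' minimizing the modified weight is universally optimal for the post-query instance: w*(S') ≤ w*(S) for every feasible S and every realization w* of the remaining intervals. -/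
/-- Auxiliary: `sInf` of the `EReal`-coercion of a finite nonempty image equals the
coercion of the real `sInf`. -/
theorem my_sInf_image_coe {α : Type*} (s : Set α) (g : α → ℝ) (hfin : s.Finite)
    (hne : s.Nonempty) :
    sInf ((fun a => ((g a : ℝ) : EReal)) '' s) = ((sInf (g '' s) : ℝ) : EReal) := by
  have hgfin : (g '' s).Finite := hfin.image g
  have hgne : (g '' s).Nonempty := hne.image g
  have hmem : sInf (g '' s) ∈ g '' s := hgne.csInf_mem hgfin
  apply le_antisymm
  · obtain ⟨a, ha, hga⟩ := hmem
    exact sInf_le ⟨a, ha, by show ((g a : ℝ) : EReal) = _; rw [hga]⟩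
  · apply le_sInf
    rintro b ⟨a, ha, rfl⟩
    show ((sInf (g '' s) : ℝ) : EReal) ≤ ((g a : ℝ) : EReal)
    exact_mod_cast csInf_le hgfin.bddBelow ⟨a, ha, rfl⟩

/-- Auxiliary: if `a ≤ ε * C` for all small positive `ε`, then `a ≤ 0`. -/
theorem my_eps_le (a C : ℝ) (h : ∀ ε : ℝ, 0 < ε → ε ≤ 1 → a ≤ ε * C) : a ≤ 0 := by
  by_contra hc
  push_neg at hc
  rcases le_or_gt C 0 with hC | hC
  · have h1 := h 1 one_pos le_rfl
    linarith
  · have hε : 0 < min 1 (a / (2 * C)) := lt_min one_pos (by positivity)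
    have h2 := h _ hε (min_le_left _ _)
    have h3 : min 1 (a / (2 * C)) * C ≤ (a / (2 * C)) * C :=
      mul_le_mul_of_nonneg_right (min_le_right _ _) hC.le
    have h4 : (a / (2 * C)) * C = a / 2 := by field_simp
    linarith

open scoped Classical in
/-- Query the uncolored non-trivial elements `Q`, revealing true weights
`q`.  Let `M` be the constant `Σ_{e ∈ T ∪ Q} |w_e| + Σ_{e ∈ B ∪ R} (|ℓ_e| + |h_e|)`, and
modify the weights by giving every blue element weight `-M` and every red element weight
`M` (keeping revealed weights on `Q` and the weights of trivial elements).  Then every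
feasible set minimizing the modified weight is universally optimal for the post-query
instance: `w*(S') ≤ w*(S)` for every feasible `S` and every realization `w*` of the
remaining intervals. -/
theorem stmt11 {ι : Type*} [Fintype ι] [DecidableEq ι]
    (F : Set (Finset ι)) (hF : F.Nonempty) (lo hi : ι → ℝ) (hlh : ∀ f, lo f ≤ hi f)
    (q : ι → ℝ) (hq : ∀ f ∈ Quncol F lo hi, q f ∈ Set.Icc (lo f) (hi f))
    (M : ℝ)
    (hM : M = ∑ e : ι, (if Blue F lo hi e ∨ Red F lo hi e then |lo e| + |hi e|
                        else if lo e = hi e then |lo e| else |q e|))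
    (wmod : ι → ℝ)
    (hwmod : ∀ e, wmod e = if Blue F lo hi e then -M else if Red F lo hi e then M
                           else if lo e = hi e then lo e else q e)
    (S' : Finset ι) (hS' : IsOpt F wmod S') :
    ∀ wstar : ι → ℝ, Realiz lo hi wstar → (∀ f ∈ Quncol F lo hi, wstar f = q f) →
      ∀ S ∈ F, cst wstar S' ≤ cst wstar S := by
  intro wstar hreal hqQ
  classical
  -- every colored element's bound contributes to `M`
  have hMterm : ∀ f, Blue F lo hi f ∨ Red F lo hi f → |lo f| + |hi f| ≤ M := by
    intro f hf
    have hterm : (if Blue F lo hi f ∨ Red F lo hi f then |lo f| + |hi f|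
        else if lo f = hi f then |lo f| else |q f|) = |lo f| + |hi f| := if_pos hf
    calc |lo f| + |hi f|
        = (if Blue F lo hi f ∨ Red F lo hi f then |lo f| + |hi f|
            else if lo f = hi f then |lo f| else |q f|) := hterm.symm
      _ ≤ M := by
          rw [hM]
          exact Finset.single_le_sum
            (f := fun e => if Blue F lo hi e ∨ Red F lo hi e then |lo e| + |hi e|
              else if lo e = hi e then |lo e| else |q e|)
            (fun e _ => by split_ifs <;> positivity) (Finset.mem_univ f)
  -- uncolored elements have fixed weight `wmod`
  have huncol : ∀ (w : ι → ℝ), Realiz lo hi w → (∀ f ∈ Quncol F lo hi, w f = q f) →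
      ∀ f, ¬ Blue F lo hi f → ¬ Red F lo hi f → w f = wmod f := by
    intro w hw hwq f hB hR
    rw [hwmod f, if_neg hB, if_neg hR]
    by_cases h : lo f = hi f
    · rw [if_pos h]
      have h1 := (hw f).1
      have h2 := (hw f).2
      linarith
    · rw [if_neg h]
      apply hwq
      simp only [Quncol, Finset.mem_filter, Finset.mem_univ, true_and]
      exact ⟨lt_of_le_of_ne (hlh f) h, hB, hR⟩
  -- core lemma: for realizations that are strictly below `hi` on blue elements and
  -- strictly above `lo` on red elements, `S'` is optimal
  have core : ∀ (w : ι → ℝ), Realiz lo hi w →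
      (∀ f, ¬ Blue F lo hi f → ¬ Red F lo hi f → w f = wmod f) →
      (∀ f, Blue F lo hi f → w f < hi f) → (∀ f, Red F lo hi f → lo f < w f) →
      ∀ S ∈ F, cst w S' ≤ cst w S := by
    intro w hw hwu hwb hwr S hS
    obtain ⟨Ts, hTs, hTsmin⟩ := Finset.exists_min_image (Set.toFinite F).toFinset (cst w)
      (by rwa [Set.Finite.toFinset_nonempty])
    rw [Set.Finite.mem_toFinset] at hTs
    have hTsmin' : ∀ X ∈ F, cst w Ts ≤ cst w X := fun X hX =>
      hTsmin X ((Set.Finite.mem_toFinset _).mpr hX)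
    -- blue elements of `S'` belong to the minimizer
    have hblue : ∀ e, Blue F lo hi e → e ∈ S' → e ∈ Ts := by
      intro e hBe heS'
      by_contra heTs
      have hAne : ({X | X ∈ F ∧ e ∉ X} : Set (Finset ι)).Nonempty := ⟨Ts, hTs, heTs⟩
      have hApne : ({X | X ∈ F ∧ e ∈ X} : Set (Finset ι)).Nonempty := ⟨S', hS'.1, heS'⟩
      have hAfin : ({X | X ∈ F ∧ e ∉ X} : Set (Finset ι)).Finite := Set.toFinite _
      have hApfin : ({X | X ∈ F ∧ e ∈ X} : Set (Finset ι)).Finite := Set.toFinite _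
      have hm : eOPTm F w e = ((OPTm F w e : ℝ) : EReal) :=
        my_sInf_image_coe {X | X ∈ F ∧ e ∉ X} (cst w) hAfin hAne
      have hp : eOPTp F w e = ((OPTp F w e : ℝ) : EReal) :=
        my_sInf_image_coe {X | X ∈ F ∧ e ∈ X} (fun X => cst w (X.erase e)) hApfin hApne
      have hthr : eThr F w e = ((Thr F w e : ℝ) : EReal) := by
        show eOPTm F w e - eOPTp F w e = _
        rw [hm, hp]
        exact (EReal.coe_sub _ _).symm
      have h0 : eTplus F lo hi e ≤ eThr F w e := sInf_le ⟨w, fun f _ => hw f, rfl⟩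
      have hle : (hi e : EReal) ≤ eThr F w e := le_trans hBe.2 h0
      rw [hthr] at hle
      have hle' : hi e ≤ Thr F w e := by exact_mod_cast hle
      simp only [Thr] at hle'
      obtain ⟨T0, hT0, hT0c⟩ :=
        (hApne.image (fun X => cst w (X.erase e))).csInf_mem (hApfin.image _)
      replace hT0c : cst w (T0.erase e) = OPTp F w e := hT0c
      have h1 : OPTm F w e ≤ cst w Ts :=
        csInf_le (hAfin.image (cst w)).bddBelow (Set.mem_image_of_mem _ ⟨hTs, heTs⟩)
      have h2 : cst w T0 = cst w (T0.erase e) + w e := (Finset.sum_erase_add T0 w hT0.2).symm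
      have h3 : cst w Ts ≤ cst w T0 := hTsmin' T0 hT0.1
      have h4 : w e < hi e := hwb e hBe
      linarith
    -- red elements of the minimizer belong to `S'`
    have hred : ∀ e, Red F lo hi e → e ∈ Ts → e ∈ S' := by
      intro e hRe heTs
      by_contra heS'
      have hAne : ({X | X ∈ F ∧ e ∉ X} : Set (Finset ι)).Nonempty := ⟨S', hS'.1, heS'⟩
      have hApne : ({X | X ∈ F ∧ e ∈ X} : Set (Finset ι)).Nonempty := ⟨Ts, hTs, heTs⟩
      have hAfin : ({X | X ∈ F ∧ e ∉ X} : Set (Finset ι)).Finite := Set.toFinite _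
      have hApfin : ({X | X ∈ F ∧ e ∈ X} : Set (Finset ι)).Finite := Set.toFinite _
      have hm : eOPTm F w e = ((OPTm F w e : ℝ) : EReal) :=
        my_sInf_image_coe {X | X ∈ F ∧ e ∉ X} (cst w) hAfin hAne
      have hp : eOPTp F w e = ((OPTp F w e : ℝ) : EReal) :=
        my_sInf_image_coe {X | X ∈ F ∧ e ∈ X} (fun X => cst w (X.erase e)) hApfin hApne
      have hthr : eThr F w e = ((Thr F w e : ℝ) : EReal) := by
        show eOPTm F w e - eOPTp F w e = _
        rw [hm, hp]
        exact (EReal.coe_sub _ _).symm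
      have h0 : eThr F w e ≤ eTminus F lo hi e := le_sSup ⟨w, fun f _ => hw f, rfl⟩
      have hle : eThr F w e ≤ (lo e : EReal) := le_trans h0 hRe.2
      rw [hthr] at hle
      have hle' : Thr F w e ≤ lo e := by exact_mod_cast hle
      simp only [Thr] at hle'
      obtain ⟨S0, hS0, hS0c⟩ := (hAne.image (cst w)).csInf_mem (hAfin.image _)
      replace hS0c : cst w S0 = OPTm F w e := hS0c
      have h1 : OPTp F w e ≤ cst w (Ts.erase e) :=
        csInf_le (hApfin.image _).bddBelow (Set.mem_image_of_mem _ ⟨hTs, heTs⟩)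
      have h2 : cst w Ts = cst w (Ts.erase e) + w e := (Finset.sum_erase_add Ts w heTs).symm
      have h3 : cst w Ts ≤ cst w S0 := hTsmin' S0 hS0.1
      have h4 : lo e < w e := hwr e hRe
      linarith
    -- sign analysis of `D = w - wmod`
    have hDpos : ∀ f ∈ Ts \ S', 0 ≤ w f - wmod f := by
      intro f hf
      rw [Finset.mem_sdiff] at hf
      by_cases hB : Blue F lo hi f
      · rw [hwmod f, if_pos hB]
        have h5 := hMterm f (Or.inl hB)
        have h6 := (hw f).1
        have h7 := neg_abs_le (lo f)
        have h8 := abs_nonneg (hi f)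
        linarith
      · by_cases hR : Red F lo hi f
        · exact absurd (hred f hR hf.1) hf.2
        · rw [hwu f hB hR]
          linarith
    have hDneg : ∀ f ∈ S' \ Ts, w f - wmod f ≤ 0 := by
      intro f hf
      rw [Finset.mem_sdiff] at hf
      by_cases hB : Blue F lo hi f
      · exact absurd (hblue f hB hf.1) hf.2
      · by_cases hR : Red F lo hi f
        · rw [hwmod f, if_neg hB, if_pos hR]
          have h5 := hMterm f (Or.inr hR)
          have h6 := (hw f).2
          have h7 := le_abs_self (hi f)
          have h8 := abs_nonneg (lo f)
          linarith
        · rw [hwu f hB hR]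
          linarith
    -- cost decomposition
    have hcw : ∀ X : Finset ι, cst w X = cst wmod X + ∑ f ∈ X, (w f - wmod f) := by
      intro X
      simp only [cst]
      rw [← Finset.sum_add_distrib]
      exact Finset.sum_congr rfl (fun f _ => by ring)
    have hsp1 : ∑ f ∈ S' \ (S' ∩ Ts), (w f - wmod f) + ∑ f ∈ S' ∩ Ts, (w f - wmod f)
        = ∑ f ∈ S', (w f - wmod f) := Finset.sum_sdiff Finset.inter_subset_left
    have hsp2 : ∑ f ∈ Ts \ (Ts ∩ S'), (w f - wmod f) + ∑ f ∈ Ts ∩ S', (w f - wmod f)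
        = ∑ f ∈ Ts, (w f - wmod f) := Finset.sum_sdiff Finset.inter_subset_left
    have heq1 : S' \ (S' ∩ Ts) = S' \ Ts := by
      ext x; simp only [Finset.mem_sdiff, Finset.mem_inter]; tauto
    have heq2 : Ts \ (Ts ∩ S') = Ts \ S' := by
      ext x; simp only [Finset.mem_sdiff, Finset.mem_inter]; tauto
    have heq3 : S' ∩ Ts = Ts ∩ S' := Finset.inter_comm _ _
    rw [heq1] at hsp1
    rw [heq2] at hsp2
    have hn1 : ∑ f ∈ S' \ Ts, (w f - wmod f) ≤ 0 := Finset.sum_nonpos hDneg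
    have hn2 : 0 ≤ ∑ f ∈ Ts \ S', (w f - wmod f) := Finset.sum_nonneg hDpos
    have hopt : cst wmod S' ≤ cst wmod Ts := hS'.2 Ts hTs
    have hfinal : cst w S' ≤ cst w Ts := by
      rw [hcw S', hcw Ts, ← hsp1, ← hsp2, heq3]
      linarith
    exact le_trans hfinal (hTsmin' S hS)
  -- perturbation towards the midpoint on colored elements
  set δ : ι → ℝ := fun f => if Blue F lo hi f ∨ Red F lo hi f
      then (lo f + hi f) / 2 - wstar f else 0 with hδ
  have key : ∀ ε : ℝ, 0 < ε → ε ≤ 1 →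
      ∀ S ∈ F, cst wstar S' + ε * cst δ S' ≤ cst wstar S + ε * cst δ S := by
    intro ε hε hε1 S hS
    have hcst : ∀ X : Finset ι, cst (fun f => wstar f + ε * δ f) X
        = cst wstar X + ε * cst δ X := by
      intro X
      simp only [cst]
      rw [Finset.mul_sum, ← Finset.sum_add_distrib]
    rw [← hcst, ← hcst]
    have hwreal : Realiz lo hi (fun f => wstar f + ε * δ f) := by
      intro f
      have h1 := (hreal f).1
      have h2 := (hreal f).2
      have h3 := hlh f
      simp only [hδ]
      split_ifs with h
      · constructor
        · nlinarith
        · nlinarith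
      · simpa using hreal f
    have hwq : ∀ f ∈ Quncol F lo hi, (fun f => wstar f + ε * δ f) f = q f := by
      intro f hf
      have hf' := hf
      simp only [Quncol, Finset.mem_filter, Finset.mem_univ, true_and] at hf'
      have : δ f = 0 := if_neg (by tauto)
      simp only [this, mul_zero, add_zero]
      exact hqQ f hf
    refine core _ hwreal ?_ ?_ ?_ S hS
    · intro f hB hR
      have : δ f = 0 := if_neg (by tauto)
      simp only [this, mul_zero, add_zero]
      exact huncol wstar hreal hqQ f hB hR
    · intro f hBf
      have h1 := (hreal f).2
      have hlt := hBf.1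
      have : δ f = (lo f + hi f) / 2 - wstar f := if_pos (Or.inl hBf)
      rw [this]
      nlinarith
    · intro f hRf
      have h1 := (hreal f).1
      have hlt := hRf.1
      have : δ f = (lo f + hi f) / 2 - wstar f := if_pos (Or.inr hRf)
      rw [this]
      nlinarith
  intro S hS
  have hconc : cst wstar S' - cst wstar S ≤ 0 := by
    apply my_eps_le _ (cst δ S - cst δ S')
    intro ε h1 h2
    have h3 := key ε h1 h2 S hS
    nlinarith
  linarith
end

section
/- Assume T⁻_e ≠ −∞ for element e, and let I^α_e = [K−1, α] where K = −Σ_{f≠e}(|ℓ_f| + |h_f|). Then T⁺_e ≥ α for the original intervals if and only if E \ {e} is an admissible query for the modified instance with interval I^α_e on e; this yields a binary-search reduction from approximate threshold computation to admissible-query testing. -/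
/-- The infimum of a finite nonempty family is attained. -/
lemma attain {ι : Type*} [Fintype ι] (g : Finset ι → ℝ) (P : Set (Finset ι))
    (hP : P.Nonempty) :
    ∃ S ∈ P, sInf ((fun S => ((g S : ℝ) : EReal)) '' P) = ((g S : ℝ) : EReal) ∧
      ∀ S' ∈ P, g S ≤ g S' := by
  have hfin : ((fun S => ((g S : ℝ) : EReal)) '' P).Finite := (Set.toFinite P).image _
  have hne : ((fun S => ((g S : ℝ) : EReal)) '' P).Nonempty := hP.image _
  obtain ⟨S, hS, hEq⟩ := hne.csInf_mem hfin
  refine ⟨S, hS, hEq.symm, fun S' hS' => ?_⟩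
  have h := sInf_le (Set.mem_image_of_mem (fun S => ((g S : ℝ) : EReal)) hS')
  rw [hEq.symm] at h
  simp only [] at h
  exact EReal.coe_le_coe_iff.mp h

lemma cst_congr {ι : Type*} (w q : ι → ℝ) (S : Finset ι)
    (h : ∀ f ∈ S, w f = q f) : cst w S = cst q S := Finset.sum_congr rfl h

lemma cst_split {ι : Type*} [DecidableEq ι] (w : ι → ℝ) (e : ι) (S : Finset ι)
    (h : e ∈ S) : cst w S = cst w (S.erase e) + w e := by
  unfold cst
  rw [← Finset.sum_erase_add S w h]

lemma sumdiff_bound {ι : Type*} [Fintype ι] [DecidableEq ι] (lo hi q : ι → ℝ)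
    (e : ι) (hq : ∀ f, f ≠ e → q f ∈ Set.Icc (lo f) (hi f))
    (A B : Finset ι) (hA : e ∉ A) (hB : e ∉ B) :
    -∑ f ∈ Finset.univ.erase e, (|lo f| + |hi f|) ≤ cst q A - cst q B := by
  have habs : ∀ f ∈ Finset.univ.erase e, |q f| ≤ |lo f| + |hi f| := by
    intro f hf
    rw [Finset.mem_erase] at hf
    obtain ⟨h1, h2⟩ := hq f hf.1
    rw [abs_le]
    constructor
    · nlinarith [neg_abs_le (lo f), abs_nonneg (hi f)]
    · nlinarith [le_abs_self (hi f), abs_nonneg (lo f)]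
  have key : cst q A - cst q B = (∑ f ∈ A \ B, q f) - ∑ f ∈ B \ A, q f := by
    unfold cst
    rw [← Finset.sum_inter_add_sum_sdiff A B q, ← Finset.sum_inter_add_sum_sdiff B A q,
      Finset.inter_comm B A]
    ring
  have hsub : (A \ B) ∪ (B \ A) ⊆ Finset.univ.erase e := by
    intro f hf
    rw [Finset.mem_erase]
    refine ⟨?_, Finset.mem_univ f⟩
    rw [Finset.mem_union, Finset.mem_sdiff, Finset.mem_sdiff] at hf
    rintro rfl
    rcases hf with ⟨h, _⟩ | ⟨h, _⟩
    exacts [hA h, hB h]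
  have hd : Disjoint (A \ B) (B \ A) := disjoint_sdiff_sdiff
  have hU : (∑ f ∈ A \ B, |q f|) + ∑ f ∈ B \ A, |q f| = ∑ f ∈ (A \ B) ∪ (B \ A), |q f| :=
    (Finset.sum_union hd).symm
  have hsub' : ∑ f ∈ (A \ B) ∪ (B \ A), |q f| ≤ ∑ f ∈ Finset.univ.erase e, |q f| :=
    Finset.sum_le_sum_of_subset_of_nonneg hsub (fun _ _ _ => abs_nonneg _)
  have hcomp : ∑ f ∈ Finset.univ.erase e, |q f| ≤
      ∑ f ∈ Finset.univ.erase e, (|lo f| + |hi f|) := Finset.sum_le_sum habs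
  have h1 : |∑ f ∈ A \ B, q f| ≤ ∑ f ∈ A \ B, |q f| := Finset.abs_sum_le_sum_abs _ _
  have h2 : |∑ f ∈ B \ A, q f| ≤ ∑ f ∈ B \ A, |q f| := Finset.abs_sum_le_sum_abs _ _
  have h3 := neg_abs_le (∑ f ∈ A \ B, q f)
  have h4 := le_abs_self (∑ f ∈ B \ A, q f)
  linarith [key]


/-- Assume `T⁻_e ≠ -∞` and let `I^α_e = [K - 1, α]` where
`K = -Σ_{f ≠ e} (|ℓ f| + |h f|)`.  Then `T⁺_e ≥ α` for the original intervals if and only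
if `E \ {e}` is an admissible query for the modified instance in which the interval of `e`
is replaced by `I^α_e`.  (This yields a binary-search reduction from approximate threshold
computation to admissible-query testing.) -/
theorem stmt12 {ι : Type*} [Fintype ι] [DecidableEq ι]
    (F : Set (Finset ι)) (lo hi : ι → ℝ) (hlh : ∀ f, lo f ≤ hi f) (e : ι) (α : ℝ)
    (hT : eTminus F lo hi e ≠ ⊥)
    (K : ℝ) (hK : K = -∑ f ∈ Finset.univ.erase e, (|lo f| + |hi f|))
    (hKα : K - 1 ≤ α) :
    (α : EReal) ≤ eTplus F lo hi e ↔
      Admissible F (Function.update lo e (K - 1)) (Function.update hi e α)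
        (Finset.univ.erase e) := by

  classical
  have hQmem : ∀ f : ι, f ∈ Finset.univ.erase e ↔ f ≠ e := by
    intro f; simp [Finset.mem_erase]
  -- there is a feasible set containing e
  have hP : {S : Finset ι | S ∈ F ∧ e ∈ S}.Nonempty := by
    by_contra hPe
    rw [Set.not_nonempty_iff_eq_empty] at hPe
    refine hT (le_bot_iff.mp (sSup_le ?_))
    rintro t ⟨w, hw, rfl⟩
    unfold eThr eOPTp
    rw [hPe, Set.image_empty, sInf_empty, EReal.sub_top]
  constructor
  · -- forward direction
    intro hα q hq
    have hq' : ∀ f, f ≠ e → q f ∈ Set.Icc (lo f) (hi f) := by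
      intro f hf
      have h := hq f ((hQmem f).mpr hf)
      rwa [Function.update_of_ne hf, Function.update_of_ne hf] at h
    obtain ⟨Sp, hSpP, hSpEq, hSpMin⟩ :=
      attain (fun S => cst q (S.erase e)) {S | S ∈ F ∧ e ∈ S} hP
    refine ⟨Sp, hSpP.1, ?_⟩
    intro w hw S' hS'
    have hwq : ∀ f, f ≠ e → w f = q f := by
      intro f hf
      have h := hw f
      simp only [if_pos ((hQmem f).mpr hf)] at h
      exact le_antisymm h.2 h.1
    have hwe : w e ∈ Set.Icc (K - 1) α := by
      have h := hw e
      have he' : e ∉ Finset.univ.erase e := Finset.notMem_erase e _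
      simp only [if_neg he', Function.update_self] at h
      exact h
    have hcw : ∀ S : Finset ι, e ∈ S → cst w S = cst q (S.erase e) + w e := by
      intro S hS
      rw [cst_split w e S hS]
      congr 1
      exact cst_congr w q _ (fun f hf => hwq f (Finset.ne_of_mem_erase hf))
    by_cases hS'e : e ∈ S'
    · rw [hcw Sp hSpP.2, hcw S' hS'e]
      exact add_le_add (hSpMin S' ⟨hS', hS'e⟩) le_rfl
    · have hcw' : cst w S' = cst q S' :=
        cst_congr w q S' (fun f hf => hwq f (ne_of_mem_of_not_mem hf hS'e))
      rw [hcw Sp hSpP.2, hcw']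
      have h1 : (α : EReal) ≤ eThr F q e := le_trans hα (sInf_le ⟨q, hq', rfl⟩)
      have h2 : eOPTm F q e ≤ ((cst q S' : ℝ) : EReal) :=
        sInf_le ⟨S', ⟨hS', hS'e⟩, rfl⟩
      have h3 : eThr F q e ≤ ((cst q S' : ℝ) : EReal) - ((cst q (Sp.erase e) : ℝ) : EReal) := by
        unfold eThr
        rw [show eOPTp F q e = ((cst q (Sp.erase e) : ℝ) : EReal) from hSpEq]
        exact EReal.sub_le_sub h2 le_rfl
      have h4 : (α : EReal) ≤ ((cst q S' - cst q (Sp.erase e) : ℝ) : EReal) := by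
        rw [EReal.coe_sub]; exact le_trans h1 h3
      have h5 : α ≤ cst q S' - cst q (Sp.erase e) := EReal.coe_le_coe_iff.mp h4
      linarith [hwe.2]
  · -- backward direction
    intro hAdm
    refine le_sInf ?_
    rintro t ⟨w, hw, rfl⟩
    have hqC : ∀ f ∈ Finset.univ.erase e,
        w f ∈ Set.Icc (Function.update lo e (K - 1) f) (Function.update hi e α f) := by
      intro f hf
      have hfe := (hQmem f).mp hf
      rw [Function.update_of_ne hfe, Function.update_of_ne hfe]
      exact hw f hfe
    obtain ⟨S, hSF, hSopt⟩ := hAdm w hqC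
    have he' : e ∉ Finset.univ.erase e := Finset.notMem_erase e _
    have hreal : ∀ a : ℝ, a ∈ Set.Icc (K - 1) α →
        Realiz (fun f => if f ∈ Finset.univ.erase e then w f else Function.update lo e (K - 1) f)
          (fun f => if f ∈ Finset.univ.erase e then w f else Function.update hi e α f)
          (Function.update w e a) := by
      intro a ha f
      by_cases hfe : f = e
      · subst hfe
        simp only [if_neg he', Function.update_self]
        exact ha
      · simp only [if_pos ((hQmem f).mpr hfe), Function.update_of_ne hfe]
        exact ⟨le_refl _, le_refl _⟩
    have hupd : ∀ (a : ℝ) (T : Finset ι), e ∈ T →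
        cst (Function.update w e a) T = cst w (T.erase e) + a := by
      intro a T hT
      rw [cst_split _ e T hT, Function.update_self]
      congr 1
      exact cst_congr _ w _ (fun f hf => Function.update_of_ne (Finset.ne_of_mem_erase hf) _ _)
    have hupd' : ∀ (a : ℝ) (T : Finset ι), e ∉ T →
        cst (Function.update w e a) T = cst w T := by
      intro a T hT
      exact cst_congr _ w T (fun f hf => Function.update_of_ne (ne_of_mem_of_not_mem hf hT) _ _)
    by_cases hSe : e ∈ S
    · by_cases hM : {S : Finset ι | S ∈ F ∧ e ∉ S}.Nonempty
      · obtain ⟨Sm, hSmM, hSmEq, hSmMin⟩ := attain (fun S => cst w S) {S | S ∈ F ∧ e ∉ S} hM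
        have hle := hSopt (Function.update w e α) (hreal α ⟨hKα, le_refl _⟩) Sm hSmM.1
        rw [hupd α S hSe, hupd' α Sm hSmM.2] at hle
        have h5 : α ≤ cst w Sm - cst w (S.erase e) := by linarith
        have hOPTple : eOPTp F w e ≤ ((cst w (S.erase e) : ℝ) : EReal) :=
          sInf_le ⟨S, ⟨hSF, hSe⟩, rfl⟩
        have h6 : ((cst w Sm - cst w (S.erase e) : ℝ) : EReal) ≤ eThr F w e := by
          unfold eThr
          rw [show eOPTm F w e = ((cst w Sm : ℝ) : EReal) from hSmEq, EReal.coe_sub]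
          exact EReal.sub_le_sub le_rfl hOPTple
        exact le_trans (EReal.coe_le_coe_iff.mpr h5) h6
      · rw [Set.not_nonempty_iff_eq_empty] at hM
        obtain ⟨Sp, hSpP, hSpEq, _⟩ := attain (fun S => cst w (S.erase e)) {S | S ∈ F ∧ e ∈ S} hP
        unfold eThr
        rw [show eOPTm F w e = ⊤ by unfold eOPTm; rw [hM, Set.image_empty, sInf_empty],
          show eOPTp F w e = ((cst w (Sp.erase e) : ℝ) : EReal) from hSpEq,
          EReal.top_sub_coe]
        exact le_top
    · exfalso
      obtain ⟨S0, hS0⟩ := hP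
      have hle := hSopt (Function.update w e (K - 1)) (hreal (K - 1) ⟨le_refl _, hKα⟩) S0 hS0.1
      rw [hupd (K - 1) S0 hS0.2, hupd' (K - 1) S hSe] at hle
      have hbound := sumdiff_bound lo hi w e hw S (S0.erase e) hSe (Finset.notMem_erase e S0)
      rw [← hK] at hbound
      linarith
end

section
/- For any minimum spanning tree T of a weighted graph G and any two vertices u, v, the unique u–v path in T is a minimum-bottleneck u–v path in G: its maximum edge weight is the minimum over all u–v paths in G of the maximum edge weight on the path. -/
open scoped Classical in
/-- Total weight of the edges of a graph (used for spanning trees). -/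
noncomputable def twt {V : Type*} [Fintype V] [DecidableEq V]
    (w : Sym2 V → ℝ) (T : SimpleGraph V) : ℝ :=
  ∑ e ∈ Finset.univ.filter (fun e => e ∈ T.edgeSet), w e

/-- `T` is a spanning tree of `G`: a subgraph (on the same vertex set) which is a tree. -/
def IsSpanningTree {V : Type*} (G T : SimpleGraph V) : Prop :=
  T ≤ G ∧ T.IsTree

/-- `T` is a minimum spanning tree of `G` for the weights `w`. -/
def IsMST {V : Type*} [Fintype V] [DecidableEq V]
    (G : SimpleGraph V) (w : Sym2 V → ℝ) (T : SimpleGraph V) : Prop :=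
  IsSpanningTree G T ∧ ∀ T', IsSpanningTree G T' → twt w T ≤ twt w T'

open SimpleGraph

section Aux

variable {V : Type*}

/-- If every adjacency of `A` yields reachability in `B`, walks in `A` give reachability
in `B`. -/
private lemma reach_of_walk_aux {A B : SimpleGraph V}
    (h : ∀ c d, A.Adj c d → B.Reachable c d) :
    ∀ {z z' : V}, A.Walk z z' → B.Reachable z z' := by
  intro z z' q
  induction q with
  | nil => exact Reachable.refl _
  | cons ha _ ih => exact (h _ _ ha).trans ih

/-- Any walk between two vertices that are not reachable in `H` contains an edge whose
endpoints are not reachable in `H`. -/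
private lemma cross_of_walk {G H : SimpleGraph V} :
    ∀ {u v : V} (q : G.Walk u v), ¬ H.Reachable u v →
      ∃ a b, s(a, b) ∈ q.edges ∧ G.Adj a b ∧ ¬ H.Reachable a b := by
  intro u v q
  induction q with
  | nil => exact fun h => absurd (Reachable.refl _) h
  | @cons u c v' ha q ih =>
    intro h
    by_cases hr : H.Reachable u c
    · obtain ⟨a, b, hm, hadj, hnr⟩ := ih (fun hcv => h (hr.trans hcv))
      exact ⟨a, b, by simp [hm], hadj, hnr⟩
    · exact ⟨u, c, by simp, ha, hr⟩

/-- Deleting an edge of a trail splits its endpoints into the two sides of the edge. -/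
private lemma split_of_mem_edges {T : SimpleGraph V} {x y : V} :
    ∀ {u v : V} (p : T.Walk u v), p.IsTrail → s(x, y) ∈ p.edges →
      ((T.deleteEdges {s(x, y)}).Reachable u x ∧ (T.deleteEdges {s(x, y)}).Reachable y v) ∨
      ((T.deleteEdges {s(x, y)}).Reachable u y ∧ (T.deleteEdges {s(x, y)}).Reachable x v) := by
  intro u v p
  induction p with
  | nil => intro _ h; simp at h
  | @cons u c v' ha q ih =>
    intro ht he
    have ht' := (Walk.isTrail_cons ha q).mp ht
    rw [Walk.edges_cons, List.mem_cons] at he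
    rcases he with he | he
    · -- the deleted edge is the first edge of the walk
      have hq : ∀ e ∈ q.edges, e ∈ (T.deleteEdges {s(x, y)}).edgeSet := by
        intro e hee
        rw [edgeSet_deleteEdges]
        refine ⟨q.edges_subset_edgeSet hee, ?_⟩
        intro hee'
        rw [Set.mem_singleton_iff] at hee'
        subst hee'
        rw [he] at hee
        exact ht'.2 hee
      have hcv : (T.deleteEdges {s(x, y)}).Reachable c v' :=
        (q.transfer _ hq).reachable
      rw [Sym2.eq_iff] at he
      rcases he with ⟨hx, hy⟩ | ⟨hx, hy⟩
      · subst hx; subst hy; exact Or.inl ⟨Reachable.refl _, hcv⟩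
      · subst hx; subst hy; exact Or.inr ⟨Reachable.refl _, hcv⟩
    · -- the deleted edge lies in the tail
      have hne : s(u, c) ≠ s(x, y) := fun hh => ht'.2 (hh ▸ he)
      have hadj : (T.deleteEdges {s(x, y)}).Adj u c := by
        rw [deleteEdges_adj]
        exact ⟨ha, by simpa using hne⟩
      rcases ih ht'.1 he with ⟨h1, h2⟩ | ⟨h1, h2⟩
      · exact Or.inl ⟨hadj.reachable.trans h1, h2⟩
      · exact Or.inr ⟨hadj.reachable.trans h1, h2⟩

/-- In a tree, deleting an edge of the (unique) path between `u` and `v` disconnects `u`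
from `v`. -/
private lemma not_reachable_deleteEdges {T : SimpleGraph V} (hT : T.IsTree) {u v x y : V}
    {p : T.Walk u v} (hp : p.IsPath) (he : s(x, y) ∈ p.edges) :
    ¬ (T.deleteEdges {s(x, y)}).Reachable u v := by
  intro hr
  have hb : T.IsBridge s(x, y) :=
    isAcyclic_iff_forall_edge_isBridge.mp hT.IsAcyclic (p.edges_subset_edgeSet he)
  rw [isBridge_iff] at hb
  have hb2 : ¬ (T.deleteEdges {s(x, y)}).Reachable x y := hb
  rcases split_of_mem_edges p hp.isTrail he with ⟨h1, h2⟩ | ⟨h1, h2⟩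
  · exact hb2 (h1.symm.trans (hr.trans h2.symm))
  · exact hb2 (h2.trans (hr.symm.trans h1))

open scoped Classical in
private lemma twt_exchange {V : Type*} [Fintype V] [DecidableEq V] (w : Sym2 V → ℝ)
    (S S' : SimpleGraph V) {e f : Sym2 V} (hE : S'.edgeSet = (S.edgeSet \ {e}) ∪ {f})
    (heS : e ∈ S.edgeSet) (hfS : f ∉ S.edgeSet) :
    twt w S' = w f + (twt w S - w e) := by
  have hfilter : (Finset.univ.filter (fun g => g ∈ S'.edgeSet)) =
      insert f ((Finset.univ.filter (fun g => g ∈ S.edgeSet)).erase e) := by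
    ext g
    simp only [Finset.mem_filter, Finset.mem_univ, true_and, Finset.mem_insert,
      Finset.mem_erase, hE, Set.mem_union, Set.mem_diff, Set.mem_singleton_iff]
    constructor
    · rintro (⟨h1, h2⟩ | rfl)
      · exact Or.inr ⟨h2, h1⟩
      · exact Or.inl rfl
    · rintro (rfl | ⟨h1, h2⟩)
      · exact Or.inr rfl
      · exact Or.inl ⟨h2, h1⟩
  have hfmem : f ∉ (Finset.univ.filter (fun g => g ∈ S.edgeSet)).erase e := by
    simp [hfS]
  have hemem : e ∈ Finset.univ.filter (fun g => g ∈ S.edgeSet) := by simp [heS]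
  unfold twt
  rw [hfilter, Finset.sum_insert hfmem, Finset.sum_erase_eq_sub hemem]

open scoped Classical in
/-- The exchange argument: an MST edge has weight at most that of any graph edge crossing
the cut obtained by deleting it from the tree. -/
private lemma exchange {V : Type*} [Fintype V] [DecidableEq V]
    {G T : SimpleGraph V} {w : Sym2 V → ℝ}
    (hT : IsMST G w T) {x y a b : V} (hxy : T.Adj x y) (hab : G.Adj a b)
    (hnr : ¬ (T.deleteEdges {s(x, y)}).Reachable a b) : w s(x, y) ≤ w s(a, b) := by
  by_cases hef : s(x, y) = s(a, b)
  · rw [hef]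
  have hTc : T.Connected := hT.1.2.isConnected
  set e : Sym2 V := s(x, y) with hedef
  set f : Sym2 V := s(a, b) with hfdef
  set D := T.deleteEdges {e} with hD
  -- f is not an edge of T
  have hfT : f ∉ T.edgeSet := by
    intro hf
    apply hnr
    refine Adj.reachable ?_
    rw [hD, deleteEdges_adj]
    exact ⟨(mem_edgeSet T).mp hf, by simpa using (Ne.symm hef)⟩
  set T' := D ⊔ fromEdgeSet {f} with hT'def
  have hDT' : D ≤ T' := le_sup_left
  have hT'ab : T'.Adj a b := Or.inr ((fromEdgeSet_adj _).mpr ⟨rfl, hab.ne⟩)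
  have hT'G : T' ≤ G := by
    refine sup_le ((deleteEdges_le _).trans hT.1.1) ?_
    intro c d hcd
    rw [fromEdgeSet_adj _, Set.mem_singleton_iff, hfdef, Sym2.eq_iff] at hcd
    rcases hcd.1 with ⟨hc, hd⟩ | ⟨hc, hd⟩
    · subst hc; subst hd; exact hab
    · subst hc; subst hd; exact hab.symm
  -- x and y are reachable in T'
  have hxyT' : T'.Reachable x y := by
    obtain ⟨pab⟩ := hTc a b
    have hmem : e ∈ (pab.toPath : T.Walk a b).edges := by
      by_contra hno
      apply hnr
      have hsub : ∀ g ∈ (pab.toPath : T.Walk a b).edges, g ∈ D.edgeSet := by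
        intro g hg
        rw [hD, edgeSet_deleteEdges]
        exact ⟨Walk.edges_subset_edgeSet _ hg, fun hh => hno ((Set.mem_singleton_iff.mp hh) ▸ hg)⟩
      exact ((pab.toPath : T.Walk a b).transfer D hsub).reachable
    rcases split_of_mem_edges _ (pab.toPath.2).isTrail hmem with ⟨h1, h2⟩ | ⟨h1, h2⟩
    · exact (h1.mono hDT').symm.trans (hT'ab.reachable.trans (h2.mono hDT').symm)
    · exact (h2.mono hDT').trans ((hT'ab.symm.reachable).trans (h1.mono hDT'))
  -- T' is connected
  have hT'conn : T'.Connected := by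
    rw [connected_iff]
    refine ⟨?_, hTc.nonempty⟩
    intro z z'
    obtain ⟨pz⟩ := hTc z z'
    refine reach_of_walk_aux ?_ pz
    intro c d hcd
    by_cases hcd' : s(c, d) = e
    · rw [hedef, Sym2.eq_iff] at hcd'
      rcases hcd' with ⟨hc, hd⟩ | ⟨hc, hd⟩
      · subst hc; subst hd; exact hxyT'
      · subst hc; subst hd; exact hxyT'.symm
    · refine Adj.reachable (hDT' ?_)
      rw [hD, deleteEdges_adj]
      exact ⟨hcd, by simpa using hcd'⟩
  -- T' is acyclic
  have hbridge : T'.IsBridge f := by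
    rw [hfdef, isBridge_iff]
    refine ?_
    intro hr
    apply hnr
    refine hr.mono ?_
    intro c d hcd
    rcases hcd with ⟨hcd1, hcd2⟩
    rcases hcd1 with h | h
    · exact h
    · exact absurd h hcd2
  have hT'acyc : T'.IsAcyclic := by
    intro z c hc
    have hfc : f ∉ c.edges := by
      have hbr := (isBridge_iff_forall_cycle_notMem (G := T') (e := f) ((mem_edgeSet T').mpr hT'ab)).mp
        hbridge
      exact hbr c hc
    have hsub : ∀ g ∈ c.edges, g ∈ T.edgeSet := by
      intro g hg
      have hg' := c.edges_subset_edgeSet hg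
      rw [hT'def, edgeSet_sup, hD, edgeSet_deleteEdges, edgeSet_fromEdgeSet] at hg'
      rcases hg' with ⟨hg1, _⟩ | ⟨hg1, _⟩
      · exact hg1
      · exact absurd (Set.mem_singleton_iff.mp hg1 ▸ hg) hfc
    exact hT.1.2.IsAcyclic (c.transfer T hsub) (hc.transfer hsub)
  -- T' is a spanning tree, so T's weight is at most T''s
  have hle := hT.2 T' ⟨hT'G, hT'conn, hT'acyc⟩
  -- compute the weight of T'
  have heT : e ∈ T.edgeSet := (mem_edgeSet T).mpr hxy
  have hfnd : ¬ f.IsDiag := by rw [hfdef]; simpa using hab.ne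
  have hE : T'.edgeSet = (T.edgeSet \ {e}) ∪ {f} := by
    rw [hT'def, edgeSet_sup, hD, edgeSet_deleteEdges, edgeSet_fromEdgeSet]
    congr 1
    ext g
    simp only [Set.mem_diff, Set.mem_singleton_iff, Set.mem_setOf_eq]
    constructor
    · exact fun h => h.1
    · rintro rfl; exact ⟨rfl, hfnd⟩
  have hw' : twt w T' = w f + (twt w T - w e) := twt_exchange w T T' hE heT hfT
  rw [hw'] at hle
  linarith

end Aux

/-- For any minimum spanning tree `T` of a connected weighted graph `G`
and any vertices `u, v`, the (unique) `u`–`v` path in `T` is a minimum-bottleneck `u`–`v`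
path of `G`: its maximum edge weight equals the minimum over all `u`–`v` paths of `G` of
the maximum edge weight on the path. -/
theorem stmt14 {V : Type*} [Fintype V] [DecidableEq V]
    (G : SimpleGraph V) (hG : G.Connected) (w : Sym2 V → ℝ)
    (T : SimpleGraph V) (hT : IsMST G w T) (u v : V)
    (p : T.Walk u v) (hp : p.IsPath) :
    sSup (w '' {f | f ∈ p.edges}) =
      sInf {t : ℝ | ∃ q : G.Walk u v, q.IsPath ∧ t = sSup (w '' {f | f ∈ q.edges})} := by
  classical
  obtain ⟨⟨hTG, hTtree⟩, hmin⟩ := hT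
  have hpe : ∀ g ∈ p.edges, g ∈ G.edgeSet :=
    fun g hg => edgeSet_mono hTG (p.edges_subset_edgeSet hg)
  have hmemS' : sSup (w '' {f | f ∈ p.edges}) ∈
      {t : ℝ | ∃ q : G.Walk u v, q.IsPath ∧ t = sSup (w '' {f | f ∈ q.edges})} :=
    ⟨p.transfer G hpe, hp.transfer hpe, by rw [p.edges_transfer hpe]⟩
  have hS'fin : {t : ℝ | ∃ q : G.Walk u v, q.IsPath ∧
      t = sSup (w '' {f | f ∈ q.edges})}.Finite := by
    haveI : DecidableRel G.Adj := Classical.decRel _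
    refine Set.Finite.subset (Set.finite_range
      (fun q : G.Path u v => sSup (w '' {f | f ∈ (q : G.Walk u v).edges}))) ?_
    rintro t ⟨q, hq, rfl⟩
    exact ⟨⟨q, hq⟩, rfl⟩
  refine le_antisymm ?_ (csInf_le hS'fin.bddBelow hmemS')
  refine le_csInf ⟨_, hmemS'⟩ ?_
  rintro t ⟨q, hq, rfl⟩
  by_cases huv : u = v
  · subst huv
    rw [Walk.isPath_iff_eq_nil.mp hp, Walk.isPath_iff_eq_nil.mp hq]
    simp
  · have hSne : (w '' {f | f ∈ p.edges}).Nonempty := by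
      have hnil : ¬ p.Nil := Walk.not_nil_of_ne huv
      have hlen : p.edges ≠ [] := by
        intro h
        apply hnil
        rw [Walk.nil_iff_length_eq, ← Walk.length_edges, h]
        rfl
      obtain ⟨g, hg⟩ := List.exists_mem_of_ne_nil _ hlen
      exact ⟨w g, g, hg, rfl⟩
    refine csSup_le hSne ?_
    rintro r ⟨g, hg, rfl⟩
    revert hg
    induction g using Sym2.ind with
    | _ x y =>
      intro hg
      have hnr := not_reachable_deleteEdges hTtree hp hg
      obtain ⟨a, b, hm, hadj, hnrab⟩ := cross_of_walk q hnr
      have hxy : T.Adj x y := (mem_edgeSet T).mp (p.edges_subset_edgeSet hg)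
      have h1 : w s(x, y) ≤ w s(a, b) :=
        exchange ⟨⟨hTG, hTtree⟩, hmin⟩ hxy hadj hnrab
      have h2 : w s(a, b) ≤ sSup (w '' {f | f ∈ q.edges}) :=
        le_csSup ((q.edges.finite_toSet.image w).bddAbove) ⟨s(a, b), hm, rfl⟩
      exact h1.trans h2
end

section
/- Let G be a weighted graph, and uv ∈ E a non-bridge edge. Then the threshold T_{uv}(w_{-uv}) for the minimum spanning tree problem equals the non-trivial bottleneck b_w(u,v), defined as the minimum over u–v paths of length at least two of the maximum edge weight on the path (equivalently, the u–v bottleneck in G − uv). -/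
open scoped Classical in
/-- `OPT^{-e}`: minimum weight of a spanning tree avoiding the edge `e`. -/
noncomputable def OPTmTree {V : Type*} [Fintype V] [DecidableEq V]
    (G : SimpleGraph V) (w : Sym2 V → ℝ) (e : Sym2 V) : ℝ :=
  sInf {t : ℝ | ∃ T, IsSpanningTree G T ∧ e ∉ T.edgeSet ∧ t = twt w T}

open scoped Classical in
/-- `OPT^{+e}`: minimum weight, with `w e` set to `0`, of a spanning tree containing `e`. -/
noncomputable def OPTpTree {V : Type*} [Fintype V] [DecidableEq V]
    (G : SimpleGraph V) (w : Sym2 V → ℝ) (e : Sym2 V) : ℝ :=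
  sInf {t : ℝ | ∃ T, IsSpanningTree G T ∧ e ∈ T.edgeSet ∧
    t = ∑ f ∈ Finset.univ.filter (fun f => f ∈ T.edgeSet ∧ f ≠ e), w f}

/-- The non-trivial bottleneck `b_w(u,v)`: the minimum over `u`–`v` paths with at least two
edges of the maximum edge weight on the path (equivalently the `u`–`v` bottleneck in
`G - uv`). -/
noncomputable def ntb {V : Type*} (G : SimpleGraph V) (w : Sym2 V → ℝ) (u v : V) : ℝ :=
  sInf {t : ℝ | ∃ q : G.Walk u v, q.IsPath ∧ 2 ≤ q.length ∧
    t = sSup (w '' {f | f ∈ q.edges})}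


section Helpers
set_option linter.unusedSectionVars false
open SimpleGraph


variable {V : Type*}

/-- Reaching `b` in `K` means in `K` minus the edge `s(x,y)` we reach `b`, `x`, or `y`. -/
lemma reach_or (K : SimpleGraph V) (x y : V) {a b : V} (hw : K.Reachable a b) :
    (K \ fromEdgeSet {s(x,y)}).Reachable a b ∨ (K \ fromEdgeSet {s(x,y)}).Reachable a x ∨
      (K \ fromEdgeSet {s(x,y)}).Reachable a y := by
  obtain ⟨p⟩ := hw
  induction p with
  | nil => exact Or.inl (Reachable.refl _)
  | @cons a c b h p ih =>
    by_cases hac : s(a, c) = s(x, y)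
    · rw [Sym2.eq_iff] at hac
      rcases hac with ⟨rfl, rfl⟩ | ⟨rfl, rfl⟩
      · exact Or.inr (Or.inl (Reachable.refl _))
      · exact Or.inr (Or.inr (Reachable.refl _))
    · have hadj : (K \ fromEdgeSet {s(x,y)}).Adj a c := by
        simp only [sdiff_adj, fromEdgeSet_adj, Set.mem_singleton_iff]
        exact ⟨h, fun hh => hac hh.1⟩
      rcases ih with h' | h' | h'
      · exact Or.inl (hadj.reachable.trans h')
      · exact Or.inr (Or.inl (hadj.reachable.trans h'))
      · exact Or.inr (Or.inr (hadj.reachable.trans h'))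

/-- Deleting a non-separating edge preserves connectivity. -/
lemma conn_del {K : SimpleGraph V} (hK : K.Connected) {x y : V}
    (h : (K \ fromEdgeSet {s(x,y)}).Reachable x y) : (K \ fromEdgeSet {s(x,y)}).Connected := by
  have hx : ∀ a, (K \ fromEdgeSet {s(x,y)}).Reachable a x := by
    intro a
    rcases reach_or K x y (hK.preconnected a x) with h' | h' | h'
    · exact h'
    · exact h'
    · exact h'.trans h.symm
  have : Nonempty V := hK.nonempty
  exact ⟨fun a b => (hx a).trans (hx b).symm⟩

variable {V : Type*} [Fintype V] [DecidableEq V]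

lemma edgeSet_finite (G : SimpleGraph V) : G.edgeSet.Finite := Set.toFinite _

/-- Every connected graph on a finite vertex type has a spanning tree. -/
lemma exists_st : ∀ (n : ℕ) (G : SimpleGraph V), G.edgeSet.ncard ≤ n → G.Connected →
    ∃ T : SimpleGraph V, T ≤ G ∧ T.IsTree := by
  intro n
  induction n with
  | zero =>
    intro G hn hG
    by_cases hA : G.IsAcyclic
    · exact ⟨G, le_refl _, ⟨hG, hA⟩⟩
    · exfalso
      rw [isAcyclic_iff_forall_edge_isBridge] at hA
      push_neg at hA
      obtain ⟨e, he, -⟩ := hA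
      have := (Set.ncard_eq_zero (edgeSet_finite G)).mp (Nat.le_zero.mp hn)
      rw [this] at he; exact he
  | succ n ih =>
    intro G hn hG
    by_cases hA : G.IsAcyclic
    · exact ⟨G, le_refl _, ⟨hG, hA⟩⟩
    · rw [isAcyclic_iff_forall_edge_isBridge] at hA
      push_neg at hA
      obtain ⟨e, he, hbr⟩ := hA
      induction e using Sym2.ind with
      | _ x y =>
      rw [isBridge_iff] at hbr
      push_neg at hbr
      have hreach : (G \ fromEdgeSet {s(x,y)}).Reachable x y := hbr
      have hconn := conn_del hG hreach
      have hes : (G \ fromEdgeSet {s(x,y)}).edgeSet = G.edgeSet \ {s(x,y)} := by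
        rw [edgeSet_sdiff, edgeSet_fromEdgeSet, edgeSet_sdiff_sdiff_isDiag]
      have hcard : (G \ fromEdgeSet {s(x,y)}).edgeSet.ncard ≤ n := by
        rw [hes, Set.ncard_diff_singleton_of_mem he]
        omega
      obtain ⟨T, hT1, hT2⟩ := ih _ hcard hconn
      exact ⟨T, hT1.trans sdiff_le, hT2⟩

lemma exists_spanning_tree (G : SimpleGraph V) (hG : G.Connected) :
    ∃ T : SimpleGraph V, T ≤ G ∧ T.IsTree :=
  exists_st _ G le_rfl hG
open scoped Classical in
lemma tree_ncard {T : SimpleGraph V} (hT : T.IsTree) : T.edgeSet.ncard + 1 = Fintype.card V := by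
  have := hT.card_edgeFinset
  rwa [Set.ncard_eq_toFinset_card'] 

lemma card_le_of_connected (G : SimpleGraph V) (hG : G.Connected) :
    Fintype.card V ≤ G.edgeSet.ncard + 1 := by
  obtain ⟨T, hle, hT⟩ := exists_spanning_tree G hG
  rw [← tree_ncard hT]
  have : T.edgeSet.ncard ≤ G.edgeSet.ncard :=
    Set.ncard_le_ncard (edgeSet_subset_edgeSet.2 hle) (edgeSet_finite G)
  omega

lemma tree_of_ncard (G : SimpleGraph V) (hG : G.Connected)
    (h : G.edgeSet.ncard + 1 = Fintype.card V) : G.IsTree := by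
  refine ⟨hG, ?_⟩
  by_contra hA
  rw [isAcyclic_iff_forall_edge_isBridge] at hA
  push_neg at hA
  obtain ⟨e, he, hbr⟩ := hA
  induction e using Sym2.ind with
  | _ x y =>
  rw [isBridge_iff] at hbr
  push_neg at hbr
  have hconn := conn_del hG hbr
  have hle := card_le_of_connected _ hconn
  have hes : (G \ fromEdgeSet {s(x,y)}).edgeSet = G.edgeSet \ {s(x,y)} := by
    rw [edgeSet_sdiff, edgeSet_fromEdgeSet, edgeSet_sdiff_sdiff_isDiag]
  rw [hes, Set.ncard_diff_singleton_of_mem he] at hle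
  have hpos : 0 < G.edgeSet.ncard := (Set.ncard_pos (edgeSet_finite G)).2 ⟨_, he⟩
  omega
lemma edge_mem_of_length_one {G : SimpleGraph V} {a b : V} (q : G.Walk a b)
    (h : q.length = 1) : s(a, b) ∈ q.edges := by
  cases q with
  | nil => simp at h
  | cons h' q' =>
    have : q'.length = 0 := by simpa using h
    have := (SimpleGraph.Walk.eq_of_length_eq_zero this)
    subst this
    simp

lemma not_mem_edges_of_two_le {G : SimpleGraph V} {a b : V} (q : G.Walk a b)
    (hq : q.IsPath) (h2 : 2 ≤ q.length) : s(a, b) ∉ q.edges := by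
  intro hmem
  cases q with
  | nil => simp at hmem
  | @cons _ c _ h' q' =>
    rw [SimpleGraph.Walk.edges_cons, List.mem_cons] at hmem
    rw [SimpleGraph.Walk.cons_isPath_iff] at hq
    rcases hmem with heq | hmem
    · rw [Sym2.eq_iff] at heq
      rcases heq with ⟨-, rfl⟩ | ⟨rfl, rfl⟩
      · have : q'.IsPath := hq.1
        have hnil : q' = SimpleGraph.Walk.nil := SimpleGraph.Walk.isPath_iff_eq_nil.mp this
        subst hnil
        simp at h2
      · exact hq.2 (q'.start_mem_support)
    · exact hq.2 (q'.fst_mem_support_of_mem_edges hmem)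

/-- First crossing edge of a walk from a `P`-vertex to a non-`P` vertex. -/
lemma exists_crossing {G : SimpleGraph V} (P : V → Prop) {a b : V} (q : G.Walk a b)
    (ha : P a) (hb : ¬ P b) :
    ∃ x y, G.Adj x y ∧ s(x, y) ∈ q.edges ∧ P x ∧ ¬ P y := by
  induction q with
  | nil => exact absurd ha hb
  | @cons a c b h q ih =>
    by_cases hc : P c
    · obtain ⟨x, y, h1, h2, h3, h4⟩ := ih hc hb
      exact ⟨x, y, h1, by simp [h2], h3, h4⟩
    · exact ⟨a, c, h, by simp, ha, hc⟩
lemma edges_mapLe {G G' : SimpleGraph V} (h : G ≤ G') {a b : V} (p : G.Walk a b) :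
    (p.mapLe h).edges = p.edges := by
  simp only [SimpleGraph.Walk.edges_mapLe_eq_edges]

/-- Removing an edge of the unique path between `a` and `b` in a tree separates `a` and `b`. -/
lemma sep_of_mem_path {T : SimpleGraph V} (hT : T.IsTree) {a b : V} {p : T.Walk a b}
    (hp : p.IsPath) {f : Sym2 V} (hf : f ∈ p.edges) :
    ¬ (T \ fromEdgeSet {f}).Reachable a b := by
  rintro ⟨q⟩
  have hfT : f ∈ T.edgeSet := p.edges_subset_edgeSet hf
  have q' : T.Walk a b := q.mapLe sdiff_le
  have hq'e : (q.mapLe sdiff_le : T.Walk a b).edges = q.edges := edges_mapLe _ q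
  have hfq : f ∉ q.edges := by
    intro hmem
    have := q.edges_subset_edgeSet hmem
    rw [edgeSet_sdiff, edgeSet_fromEdgeSet] at this
    exact this.2 ⟨rfl, T.not_isDiag_of_mem_edgeSet hfT⟩
  have heq : p = ((q.mapLe sdiff_le).toPath : T.Walk a b) :=
    hT.existsUnique_path a b |>.unique hp (q.mapLe sdiff_le).toPath.isPath
  rw [heq] at hf
  exact hfq (hq'e ▸ (q.mapLe sdiff_le).edges_toPath_subset hf)
/-- Exchange lemma: swapping into a spanning tree a new edge whose endpoints
are separated by a removed tree edge yields a spanning tree. -/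
lemma exchange_s15 {G T : SimpleGraph V} (hle : T ≤ G) (hT : T.IsTree)
    {x y : V} (hxy : G.Adj x y) (hne : s(x, y) ∉ T.edgeSet)
    {f : Sym2 V} (hf : f ∈ T.edgeSet)
    (hsep : ¬ (T \ fromEdgeSet {f}).Reachable x y) :
    ((T ⊔ fromEdgeSet {s(x, y)}) \ fromEdgeSet {f}) ≤ G ∧
      ((T ⊔ fromEdgeSet {s(x, y)}) \ fromEdgeSet {f}).IsTree ∧
      ((T ⊔ fromEdgeSet {s(x, y)}) \ fromEdgeSet {f}).edgeSet
        = (T.edgeSet ∪ {s(x, y)}) \ {f} := by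
  set T' := (T ⊔ fromEdgeSet {s(x, y)}) \ fromEdgeSet {f} with hT'
  have hfd : ¬ f.IsDiag := T.not_isDiag_of_mem_edgeSet hf
  have hfe : f ≠ s(x, y) := fun h => hne (h ▸ hf)
  have hES : T'.edgeSet = (T.edgeSet ∪ {s(x, y)}) \ {f} := by
    rw [hT', edgeSet_sdiff, edgeSet_sup, edgeSet_fromEdgeSet, edgeSet_fromEdgeSet]
    ext g
    constructor
    · rintro ⟨hg1, hg2⟩
      have hgf : g ∉ ({f} : Set (Sym2 V)) := by
        intro h
        rw [Set.mem_singleton_iff] at h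
        exact hg2 ⟨h, by rw [h]; exact hfd⟩
      refine ⟨?_, hgf⟩
      rcases hg1 with h | h
      · exact Or.inl h
      · exact Or.inr h.1
    · rintro ⟨hg1, hg2⟩
      refine ⟨?_, fun h => hg2 h.1⟩
      rcases hg1 with h | h
      · exact Or.inl h
      · refine Or.inr ⟨h, fun hd => ?_⟩
        rw [Set.mem_singleton_iff] at h
        rw [Sym2.mem_diagSet, h] at hd
        exact hxy.ne (Sym2.mk_isDiag_iff.mp hd)
  have hleG : T' ≤ G := by
    refine sdiff_le.trans (sup_le hle ?_)
    intro a b hab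
    rw [fromEdgeSet_adj, Set.mem_singleton_iff] at hab
    rcases Sym2.eq_iff.mp hab.1 with ⟨rfl, rfl⟩ | ⟨rfl, rfl⟩
    · exact hxy
    · exact hxy.symm
  -- connectivity
  induction f using Sym2.ind with
  | _ p q =>
  have hadjpq : T.Adj p q := hf
  have hreach : ∀ a, (T \ fromEdgeSet {s(p, q)}).Reachable a p ∨
      (T \ fromEdgeSet {s(p, q)}).Reachable a q := by
    intro a
    rcases reach_or T p q (hT.isConnected.preconnected a p) with h | h | h
    · exact Or.inl h
    · exact Or.inl h
    · exact Or.inr h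
  have hle' : (T \ fromEdgeSet {s(p, q)}) ≤ T' := by
    intro a b hab
    rw [sdiff_adj] at hab ⊢
    exact ⟨(le_sup_left : T ≤ _) hab.1, hab.2⟩
  have hedge : T'.Adj x y := by
    rw [hT', sdiff_adj, fromEdgeSet_adj]
    refine ⟨(le_sup_right : fromEdgeSet {s(x,y)} ≤ _) ?_, ?_⟩
    · rw [fromEdgeSet_adj]; exact ⟨rfl, hxy.ne⟩
    · rintro ⟨h1, -⟩
      exact hfe (h1.symm ▸ rfl)
  have hxyor : ((T \ fromEdgeSet {s(p, q)}).Reachable x p ∧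
        (T \ fromEdgeSet {s(p, q)}).Reachable y q) ∨
      ((T \ fromEdgeSet {s(p, q)}).Reachable x q ∧
        (T \ fromEdgeSet {s(p, q)}).Reachable y p) := by
    rcases hreach x with h1 | h1 <;> rcases hreach y with h2 | h2
    · exact absurd (h1.trans h2.symm) hsep
    · exact Or.inl ⟨h1, h2⟩
    · exact Or.inr ⟨h1, h2⟩
    · exact absurd (h1.trans h2.symm) hsep
  have hconn : T'.Connected := by
    have hall : ∀ a, T'.Reachable a x := by
      intro a
      have hpx : T'.Reachable p x ∧ T'.Reachable q x := by
        rcases hxyor with ⟨h1, h2⟩ | ⟨h1, h2⟩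
        · exact ⟨(h1.mono hle').symm, ((h2.mono hle').symm.trans hedge.symm.reachable)⟩
        · exact ⟨((h2.mono hle').symm.trans hedge.symm.reachable).trans (Reachable.refl _),
            (h1.mono hle').symm⟩
      rcases hreach a with h | h
      · exact (h.mono hle').trans hpx.1
      · exact (h.mono hle').trans hpx.2
    have : Nonempty V := hT.isConnected.nonempty
    exact ⟨fun a b => (hall a).trans (hall b).symm⟩
  have hcard : T'.edgeSet.ncard + 1 = Fintype.card V := by
    rw [hES]
    have h1 : (T.edgeSet ∪ {s(x, y)}) = insert (s(x,y)) T.edgeSet := by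
      rw [Set.union_singleton]
    rw [h1, Set.ncard_diff_singleton_of_mem (Set.mem_insert_iff.2 (Or.inr hf)),
      Set.ncard_insert_of_notMem hne (edgeSet_finite T)]
    have := tree_ncard hT
    have hpos : 0 < T.edgeSet.ncard := (Set.ncard_pos (edgeSet_finite T)).2 ⟨_, hf⟩
    omega
  exact ⟨hleG, tree_of_ncard _ hconn hcard, hES⟩
section WT
open scoped Classical

variable (w : Sym2 V → ℝ)

lemma twt_exchange_s15 {A B : SimpleGraph V} {e f : Sym2 V}
    (hB : B.edgeSet = (A.edgeSet ∪ {e}) \ {f})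
    (heA : e ∉ A.edgeSet) (hfA : f ∈ A.edgeSet) :
    twt w B = twt w A + w e - w f := by
  have hef : e ≠ f := fun h => heA (h ▸ hfA)
  have hSB : Finset.univ.filter (fun g => g ∈ B.edgeSet)
      = insert e ((Finset.univ.filter (fun g => g ∈ A.edgeSet)).erase f) := by
    ext g
    simp only [Finset.mem_filter, Finset.mem_univ, true_and, Finset.mem_insert,
      Finset.mem_erase, hB, Set.mem_diff, Set.mem_union, Set.mem_singleton_iff]
    constructor
    · rintro ⟨hg1 | rfl, hg2⟩
      · exact Or.inr ⟨hg2, hg1⟩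
      · exact Or.inl rfl
    · rintro (rfl | ⟨h1, h2⟩)
      · exact ⟨Or.inr rfl, hef⟩
      · exact ⟨Or.inl h2, h1⟩
  have hnotmem : e ∉ (Finset.univ.filter (fun g => g ∈ A.edgeSet)).erase f := by
    simp [heA]
  have hmem : f ∈ Finset.univ.filter (fun g => g ∈ A.edgeSet) := by simp [hfA]
  rw [twt, hSB, Finset.sum_insert hnotmem]
  have := Finset.sum_erase_add (Finset.univ.filter (fun g => g ∈ A.edgeSet)) w hmem
  rw [twt]
  linarith

lemma sum_ne_eq {T : SimpleGraph V} {e : Sym2 V} (he : e ∈ T.edgeSet) :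
    ∑ f ∈ Finset.univ.filter (fun f => f ∈ T.edgeSet ∧ f ≠ e), w f = twt w T - w e := by
  have hS : Finset.univ.filter (fun f => f ∈ T.edgeSet ∧ f ≠ e)
      = (Finset.univ.filter (fun g => g ∈ T.edgeSet)).erase e := by
    ext g
    simp only [Finset.mem_filter, Finset.mem_univ, true_and, Finset.mem_erase]
    tauto
  have hmem : e ∈ Finset.univ.filter (fun g => g ∈ T.edgeSet) := by simp [he]
  have := Finset.sum_erase_add (Finset.univ.filter (fun g => g ∈ T.edgeSet)) w hmem
  rw [hS, twt]
  linarith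

end WT

end Helpers

open SimpleGraph in
open scoped Classical in
/-- For a non-bridge edge `uv` of a connected weighted graph, the
threshold `T_{uv}(w_{-uv}) = OPT^{-uv} - OPT^{+uv}` for the minimum spanning tree problem
equals the non-trivial bottleneck `b_w(u, v)`. -/
theorem stmt15 {V : Type*} [Fintype V] [DecidableEq V]
    (G : SimpleGraph V) (hG : G.Connected) (w : Sym2 V → ℝ)
    (u v : V) (huv : G.Adj u v) (hb : ¬ G.IsBridge s(u, v)) :
    OPTmTree G w s(u, v) - OPTpTree G w s(u, v) = ntb G w u v := by
  set e := s(u, v) with he_def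
  set Sm := {t : ℝ | ∃ T, IsSpanningTree G T ∧ e ∉ T.edgeSet ∧ t = twt w T} with hSm_def
  set Sp := {t : ℝ | ∃ T, IsSpanningTree G T ∧ e ∈ T.edgeSet ∧
    t = ∑ f ∈ Finset.univ.filter (fun f => f ∈ T.edgeSet ∧ f ≠ e), w f} with hSp_def
  set Sb := {t : ℝ | ∃ q : G.Walk u v, q.IsPath ∧ 2 ≤ q.length ∧
    t = sSup (w '' {f | f ∈ q.edges})} with hSb_def
  have hgoal : OPTmTree G w e = sInf Sm := rfl
  have hgoalp : OPTpTree G w e = sInf Sp := rfl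
  have hgoalb : ntb G w u v = sInf Sb := rfl
  -- finiteness of the three sets
  have hSmfin : Sm.Finite := by
    apply (Set.finite_range (twt w)).subset
    rintro t ⟨T, -, -, rfl⟩; exact ⟨T, rfl⟩
  have hSpfin : Sp.Finite := by
    apply (Set.finite_range (fun T : SimpleGraph V =>
      ∑ f ∈ Finset.univ.filter (fun f => f ∈ T.edgeSet ∧ f ≠ e), w f)).subset
    rintro t ⟨T, -, -, rfl⟩; exact ⟨T, rfl⟩
  have hSbfin : Sb.Finite := by
    apply (Set.finite_range (fun q : G.Path u v =>
      sSup (w '' {f | f ∈ (q : G.Walk u v).edges}))).subset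
    rintro t ⟨q, hq, -, rfl⟩; exact ⟨⟨q, hq⟩, rfl⟩
  -- the base spanning tree avoiding e
  have hreach : (G \ fromEdgeSet {e}).Reachable u v := by
    by_contra hr
    exact hb (isBridge_iff.mpr hr)
  have hG' : (G \ fromEdgeSet {e}).Connected := conn_del hG hreach
  obtain ⟨T₀, hT₀le, hT₀tree⟩ := exists_spanning_tree _ hG'
  have hT₀G : T₀ ≤ G := hT₀le.trans sdiff_le
  have hT₀e : e ∉ T₀.edgeSet := by
    intro h
    have h2 : e ∈ (G \ fromEdgeSet {e}).edgeSet := edgeSet_mono hT₀le h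
    rw [edgeSet_sdiff, edgeSet_fromEdgeSet] at h2
    exact h2.2 ⟨rfl, by simp [he_def, huv.ne]⟩
  have hSmne : Sm.Nonempty := ⟨twt w T₀, T₀, ⟨hT₀G, hT₀tree⟩, hT₀e, rfl⟩
  -- generic construction: swap e in, a path edge f out
  have swap_in : ∀ (T : SimpleGraph V), T ≤ G → T.IsTree → e ∉ T.edgeSet →
      ∀ (p : T.Walk u v), p.IsPath → ∀ f ∈ p.edges,
      ∃ T' : SimpleGraph V, IsSpanningTree G T' ∧ e ∈ T'.edgeSet ∧
        twt w T' = twt w T + w e - w f := by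
    intro T hle hT heT p hp f hfp
    have hfT : f ∈ T.edgeSet := p.edges_subset_edgeSet hfp
    have hsep : ¬ (T \ fromEdgeSet {f}).Reachable u v := sep_of_mem_path hT hp hfp
    obtain ⟨h1, h2, h3⟩ := exchange_s15 hle hT huv heT hfT hsep
    refine ⟨_, ⟨h1, h2⟩, ?_, ?_⟩
    · rw [h3]
      exact ⟨Or.inr rfl, fun h => heT (h ▸ hfT)⟩
    · exact twt_exchange_s15 w h3 heT hfT
  -- nonemptiness of Sp
  have path_of : ∀ (T : SimpleGraph V), T.IsTree → e ∉ T.edgeSet →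
      ∃ p : T.Walk u v, p.IsPath ∧ 2 ≤ p.length := by
    intro T hT heT
    obtain ⟨p0⟩ := hT.isConnected.preconnected u v
    refine ⟨(p0.toPath : T.Walk u v), p0.toPath.isPath, ?_⟩
    set p : T.Walk u v := (p0.toPath : T.Walk u v)
    have hlen0 : p.length ≠ 0 := fun h => huv.ne (SimpleGraph.Walk.eq_of_length_eq_zero h)
    have hlen1 : p.length ≠ 1 := by
      intro h
      exact heT (p.edges_subset_edgeSet (edge_mem_of_length_one p h))
    omega
  have hSpne : Sp.Nonempty := by
    obtain ⟨p, hp, hp2⟩ := path_of T₀ hT₀tree hT₀e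
    have hedne : p.edges ≠ [] := by
      intro h
      have := p.length_edges
      rw [h] at this
      simp at this
      omega
    obtain ⟨f, hf⟩ := List.exists_mem_of_ne_nil _ hedne
    obtain ⟨T', hT', heT', -⟩ := swap_in T₀ hT₀G hT₀tree hT₀e p hp f hf
    exact ⟨_, T', hT', heT', rfl⟩
  -- nonemptiness of Sb
  have hSbne : Sb.Nonempty := by
    obtain ⟨p0, hp0⟩ := reachable_delete_edges_iff_exists_walk.mp hreach
    set q : G.Walk u v := (p0.toPath : G.Walk u v)
    have hq : q.IsPath := p0.toPath.isPath
    have heq : e ∉ q.edges := fun h => hp0 (p0.edges_toPath_subset h)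
    have hlen0 : q.length ≠ 0 := fun h => huv.ne (SimpleGraph.Walk.eq_of_length_eq_zero h)
    have hlen1 : q.length ≠ 1 := fun h => heq (edge_mem_of_length_one q h)
    exact ⟨_, q, hq, by omega, rfl⟩
  -- Direction B :  sInf Sp + sInf Sb ≤ sInf Sm
  have hB : sInf Sp + sInf Sb ≤ sInf Sm := by
    obtain ⟨T, hT, heT, hval⟩ := hSmne.csInf_mem hSmfin
    obtain ⟨p, hp, hp2⟩ := path_of T hT.2 heT
    set q : G.Walk u v := p.mapLe hT.1 with hq_def
    have hq : q.IsPath := hp.mapLe _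
    have hqe : q.edges = p.edges := edges_mapLe hT.1 p
    have hq2 : 2 ≤ q.length := by
      rw [hq_def]
      simpa [SimpleGraph.Walk.length_map] using hp2
    have hedfin : (w '' {f | f ∈ q.edges}).Finite := (q.edges.finite_toSet).image w
    have hedne : ∃ f, f ∈ q.edges := by
      apply List.exists_mem_of_ne_nil
      intro h
      have := q.length_edges
      rw [h] at this
      simp at this
      omega
    have hedne' : (w '' {f | f ∈ q.edges}).Nonempty := by
      obtain ⟨f, hf⟩ := hedne
      exact ⟨w f, f, hf, rfl⟩
    obtain ⟨f, hfq, hfw⟩ := hedne'.csSup_mem hedfin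
    obtain ⟨T', hT', heT', hwt⟩ := swap_in T hT.1 hT.2 heT p hp f (hqe ▸ hfq)
    have h1 : sInf Sp ≤ twt w T' - w e := by
      apply csInf_le hSpfin.bddBelow
      exact ⟨T', hT', heT', (sum_ne_eq w heT').symm ▸ rfl⟩
    have h2 : sInf Sb ≤ w f := by
      rw [hfw]
      exact csInf_le hSbfin.bddBelow ⟨q, hq, hq2, rfl⟩
    rw [hval]
    linarith [hwt]
  -- Direction A : sInf Sm ≤ sInf Sp + sInf Sb
  have hA : sInf Sm ≤ sInf Sp + sInf Sb := by
    obtain ⟨T, hT, heT, hval⟩ := hSpne.csInf_mem hSpfin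
    rw [sum_ne_eq w heT] at hval
    obtain ⟨q, hq, hq2, hvalb⟩ := hSbne.csInf_mem hSbfin
    have heq : e ∉ q.edges := not_mem_edges_of_two_le q hq hq2
    have hPu : (T \ fromEdgeSet {e}).Reachable u u := Reachable.refl _
    have hPv : ¬ (T \ fromEdgeSet {e}).Reachable u v := by
      have hbr : T.IsBridge e := isAcyclic_iff_forall_edge_isBridge.mp hT.2.IsAcyclic heT
      rw [he_def, isBridge_iff] at hbr
      exact hbr
    obtain ⟨x, y, hxy, hxyq, hPx, hPy⟩ :=
      exists_crossing (fun a => (T \ fromEdgeSet {e}).Reachable u a) q hPu hPv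
    have hfe : s(x, y) ≠ e := fun h => heq (h ▸ hxyq)
    have hfT : s(x, y) ∉ T.edgeSet := by
      intro h
      apply hPy
      apply hPx.trans
      apply SimpleGraph.Adj.reachable
      rw [sdiff_adj, fromEdgeSet_adj]
      exact ⟨h, fun hh => hfe hh.1⟩
    have hsep : ¬ (T \ fromEdgeSet {e}).Reachable x y := fun h => hPy (hPx.trans h)
    obtain ⟨h1, h2, h3⟩ := exchange_s15 hT.1 hT.2 hxy hfT heT hsep
    have heT' : e ∉ ((T ⊔ fromEdgeSet {s(x, y)}) \ fromEdgeSet {e}).edgeSet := by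
      rw [h3]
      rintro ⟨-, h⟩
      exact h rfl
    have hwt : twt w ((T ⊔ fromEdgeSet {s(x, y)}) \ fromEdgeSet {e})
        = twt w T + w s(x, y) - w e := twt_exchange_s15 w h3 hfT heT
    have hle1 : sInf Sm ≤ twt w T + w s(x, y) - w e := by
      rw [← hwt]
      exact csInf_le hSmfin.bddBelow ⟨_, ⟨h1, h2⟩, heT', rfl⟩
    have hle2 : w s(x, y) ≤ sInf Sb := by
      rw [hvalb]
      apply le_csSup ((q.edges.finite_toSet).image w).bddAbove
      exact ⟨s(x, y), hxyq, rfl⟩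
    linarith
  rw [hgoal, hgoalp, hgoalb]
  linarith
end
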